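/- arXiv:1508.05299 — 5 statements merged into one kernel-verified Lean document; each statement's English description precedes it below -/
import Mathlib

section
/- Let n > 1 and f, f', g, g' : I → [0,1] satisfy f ≅ f', f ≼ g, and g ≅ g'. Define f ÷ₙ g pointwise by (f ÷ₙ g)(x) = f(x)/g(x) if g(x) > 0 and (f ÷ₙ g)(x) = 1/n otherwise. Then f ÷₁ g ≅ f' ÷ₙ g', i.e., the ≅-class of the ordered division is independent of the default value n and of the ≅-representatives. -/
def Prec (I : Set ℝ) (f g : ℝ → ℝ) : Prop :=
  ∃ b > (0 : ℝ), ∃ ε > (0 : ℝ), ∀ ε' ∈ I, ε' < ε → f ε' ≤ b * g ε'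

def Cong (I : Set ℝ) (f g : ℝ → ℝ) : Prop :=
  Prec I f g ∧ Prec I g f

/-- Ordered division with default value `1/n` : `(f ÷ₙ g)(x) = f x / g x`
if `g x > 0`, and `1/n` otherwise. -/
noncomputable def odiv (n : ℕ) (f g : ℝ → ℝ) : ℝ → ℝ :=
  fun x => if 0 < g x then f x / g x else 1 / (n : ℝ)

lemma prec_trans {I : Set ℝ} {f g h : ℝ → ℝ} (h1 : Prec I f g) (h2 : Prec I g h) :
    Prec I f h := by
  obtain ⟨b1, hb1, e1, he1, H1⟩ := h1
  obtain ⟨b2, hb2, e2, he2, H2⟩ := h2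
  refine ⟨b1 * b2, by positivity, min e1 e2, lt_min he1 he2, fun x hx hxe => ?_⟩
  have := H1 x hx (lt_of_lt_of_le hxe (min_le_left _ _))
  have := H2 x hx (lt_of_lt_of_le hxe (min_le_right _ _))
  nlinarith

lemma odiv_prec (I : Set ℝ) (m n : ℕ) (hm : 0 < m) (hn : 0 < n)
    (f f' g g' : ℝ → ℝ)
    (hf0 : ∀ x ∈ I, 0 ≤ f x) (hf'0 : ∀ x ∈ I, 0 ≤ f' x)
    (hg'0 : ∀ x ∈ I, 0 ≤ g' x)
    (h1 : Prec I f f') (h2 : Prec I g' g) (h3 : Prec I f g) :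
    Prec I (odiv m f g) (odiv n f' g') := by
  obtain ⟨b1, hb1, e1, he1, H1⟩ := h1
  obtain ⟨b2, hb2, e2, he2, H2⟩ := h2
  obtain ⟨b3, hb3, e3, he3, H3⟩ := h3
  have hmpos : (0:ℝ) < m := by exact_mod_cast hm
  have hnpos : (0:ℝ) < n := by exact_mod_cast hn
  refine ⟨b1 * b2 + b3 * n + n / m, by positivity, min e1 (min e2 e3),
    lt_min he1 (lt_min he2 he3), fun x hx hxe => ?_⟩
  have hx1 := H1 x hx (lt_of_lt_of_le hxe (min_le_left _ _))
  have hx2 := H2 x hx (lt_of_lt_of_le hxe ((min_le_right _ _).trans (min_le_left _ _)))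
  have hx3 := H3 x hx (lt_of_lt_of_le hxe ((min_le_right _ _).trans (min_le_right _ _)))
  have hfx := hf0 x hx
  have hf'x := hf'0 x hx
  have hg'x := hg'0 x hx
  simp only [odiv]
  have hnm : (0:ℝ) < (n:ℝ) / m := by positivity
  have h1n : (0:ℝ) < 1 / (n:ℝ) := by positivity
  have hbb : b3 * n ≤ b1 * b2 + b3 * n + n / m := by nlinarith [mul_pos hb1 hb2]
  have hbb2 : (n:ℝ) / m ≤ b1 * b2 + b3 * n + n / m := by
    nlinarith [mul_pos hb1 hb2, mul_pos hb3 hnpos]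
  by_cases hg : 0 < g x
  · rw [if_pos hg]
    by_cases hg' : 0 < g' x
    · rw [if_pos hg']
      have hdiv : f x / g x ≤ (b1 * b2) * (f' x / g' x) := by
        have heq : (b1 * b2) * (f' x / g' x) = (b1 * b2 * f' x) / g' x := by ring
        rw [heq, div_le_div_iff₀ hg hg']
        nlinarith
      have hpos : 0 ≤ f' x / g' x := by positivity
      nlinarith [mul_nonneg (by nlinarith [mul_pos hb3 hnpos] : (0:ℝ) ≤ b3 * n + n / m) hpos]
    · rw [if_neg hg']
      have hfd : f x / g x ≤ b3 := by rw [div_le_iff₀ hg]; linarith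
      calc f x / g x ≤ b3 := hfd
        _ = b3 * n * (1 / n) := by field_simp
        _ ≤ (b1 * b2 + b3 * n + n / m) * (1 / n) :=
            mul_le_mul_of_nonneg_right hbb h1n.le
  · rw [if_neg hg]
    have hgx0 : g x ≤ 0 := le_of_not_gt hg
    have hg'0' : ¬ 0 < g' x := by
      intro h; nlinarith
    rw [if_neg hg'0']
    calc (1 : ℝ) / m = (n / m) * (1 / n) := by field_simp
      _ ≤ (b1 * b2 + b3 * n + n / m) * (1 / n) :=
          mul_le_mul_of_nonneg_right hbb2 h1n.le

theorem odiv_cong_invariant (I : Set ℝ) (n : ℕ) (hn : 1 < n)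
    (f f' g g' : ℝ → ℝ)
    (hf : ∀ x ∈ I, f x ∈ Set.Icc (0 : ℝ) 1)
    (hf' : ∀ x ∈ I, f' x ∈ Set.Icc (0 : ℝ) 1)
    (hg : ∀ x ∈ I, g x ∈ Set.Icc (0 : ℝ) 1)
    (hg' : ∀ x ∈ I, g' x ∈ Set.Icc (0 : ℝ) 1)
    (hff' : Cong I f f') (hfg : Prec I f g) (hgg' : Cong I g g') :
    Cong I (odiv 1 f g) (odiv n f' g') := by
  have hf0 : ∀ x ∈ I, 0 ≤ f x := fun x hx => (hf x hx).1
  have hf'0 : ∀ x ∈ I, 0 ≤ f' x := fun x hx => (hf' x hx).1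
  have hg0 : ∀ x ∈ I, 0 ≤ g x := fun x hx => (hg x hx).1
  have hg'0 : ∀ x ∈ I, 0 ≤ g' x := fun x hx => (hg' x hx).1
  constructor
  · exact odiv_prec I 1 n one_pos (by omega) f f' g g' hf0 hf'0 hg'0
      hff'.1 hgg'.2 hfg
  · exact odiv_prec I n 1 (by omega) one_pos f' f g' g hf'0 hf0 hg0
      hff'.2 hgg'.1 (prec_trans (prec_trans hff'.2 hfg) hgg'.1)
end

section
/- A probability distribution μ on the finite state space of a Markov chain is stationary if and only if (i) the support of μ contains only essential (recurrent) states, and (ii) for all states x and y, μ(x)·Pˣ(τ⁺_y < τ⁺_x) = μ(y)·Pʸ(τ⁺_x < τ⁺_y), where τ⁺_z denotes the first positive hitting time of z. -/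
/-!
Weight finite trajectories by `pathProb`. For a finite set `A`, the tails of trajectories that
enter `A` for the first time (at a positive time) form a prefix-free family, and every trajectory
of length `N` extends at most one of them, so their total weight is at most one. This makes the
first-step decomposition `h(z,t) = ∑_w p(z,w) h₀(w,t)` of the entrance law legitimate.

If `μ` is stationary, summing that decomposition against `μ` gives `∑_{a ∈ A} μ(a) h(a,t) = μ(t)`.
For `A = {x, y}` this says `μ x h(x,y) = μ y (1 - h(y,y)) ≥ μ y h(y,x)`, and symmetrically, hence
the balance. Mass cannot leak out of the set of states reaching a charged state, so every charged
state is essential.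

Conversely, for a charged state `z` restrict the chain to the closed set reached from `z` to get a
stationary `π` there. Comparing the balance of `μ` and of `π` at `z` and `x`, where
`Pᶻ(τ⁺_x < τ⁺_z) > 0`, shows `μ = (μ z / π z) π` on that set, and essential support shows that no
other state feeds it.
-/

/-- The probability of a path, as a product of transition probabilities. -/
def pathProb {S : Type*} (p : S → S → ℝ) : List S → ℝ
  | [] => 1
  | [_] => 1
  | a :: b :: l => p a b * pathProb p (b :: l)

/-- `γ` is a trajectory witnessing `τ⁺_y < τ⁺_x` when started at `x`:
it starts at `x`, ends at `y`, has positive length, and its intermediate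
states avoid both `x` and `y`. -/
def FirstHitPath {S : Type*} (x y : S) (γ : List S) : Prop :=
  γ.head? = some x ∧ γ.getLast? = some y ∧ 2 ≤ γ.length ∧
    ∀ z ∈ (γ.drop 1).dropLast, z ≠ x ∧ z ≠ y

/-- `Pˣ(τ⁺_y < τ⁺_x)` : the probability, starting from `x`, of hitting `y`
at a positive time before returning to `x`. -/
noncomputable def hitBeforeReturn {S : Type*} (p : S → S → ℝ) (x y : S) : ℝ :=
  ∑' γ : {γ : List S // FirstHitPath x y γ}, pathProb p γ.1

/-- Reachability in the directed graph with an arc `(a,b)` when `p a b > 0`. -/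
def Reaches {S : Type*} (p : S → S → ℝ) : S → S → Prop :=
  Relation.ReflTransGen (fun a b => 0 < p a b)

/-- A state is essential (recurrent) if it lies in a sink strongly connected
component of the transition graph. -/
def EssentialState {S : Type*} (p : S → S → ℝ) (x : S) : Prop :=
  ∀ y, Reaches p x y → Reaches p y x

open Finset

section

variable {S : Type*} {p : S → S → ℝ} {μ : S → ℝ}

lemma List.IsPrefix.dropLast_of_ne {α : Type*} {l₁ l₂ : List α} (h : l₁ <+: l₂)
    (hne : l₁ ≠ l₂) : l₁ <+: l₂.dropLast := by
  obtain ⟨r, rfl⟩ := h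
  rw [List.dropLast_append_of_ne_nil (by rintro rfl; simp at hne)]
  exact List.prefix_append _ _

lemma Fin.sum_univ_pi_succ {α M : Type*} [Fintype α] [AddCommMonoid M] {n : ℕ}
    (g : (Fin (n + 1) → α) → M) : ∑ f, g f = ∑ a, ∑ f : Fin n → α, g (Fin.cons a f) := by
  rw [← (Fin.consEquiv fun _ => α).sum_comp, Fintype.sum_prod_type]
  rfl

@[simp]
lemma pathProb_cons_cons (a b : S) (l : List S) :
    pathProb p (a :: b :: l) = p a b * pathProb p (b :: l) := rfl

lemma pathProb_nonneg (hp : ∀ x y, 0 ≤ p x y) : ∀ γ : List S, 0 ≤ pathProb p γ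
  | [] | [_] => zero_le_one
  | a :: b :: l => mul_nonneg (hp a b) (pathProb_nonneg hp (b :: l))

section Essential

variable [Fintype S]

lemma pos_of_reaches (hp : ∀ x y, 0 ≤ p x y) (hμ0 : ∀ x, 0 ≤ μ x)
    (hstat : ∀ y, ∑ x, μ x * p x y = μ y) {a b : S} (hab : Reaches p a b) (ha : 0 < μ a) :
    0 < μ b := by
  induction hab with
  | refl => exact ha
  | @tail b c _ hbc hb =>
    rw [← hstat c]
    exact (mul_pos hb hbc).trans_le <|
      single_le_sum (fun v _ => mul_nonneg (hμ0 v) (hp v c)) (mem_univ b)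

/-- No arc enters the set `C` of states reaching `x`, so stationarity gives
`μ(C) = ∑_{v ∈ C} μ v p(v, C)`, forcing `p(w, C) = 1` whenever `μ w > 0`. -/
lemma transition_eq_zero_of_stationary (hp : ∀ x y, 0 ≤ p x y) (hrow : ∀ x, ∑ y, p x y = 1)
    (hμ0 : ∀ x, 0 ≤ μ x) (hstat : ∀ y, ∑ x, μ x * p x y = μ y) {x w b : S}
    (hwx : Reaches p w x) (hw : 0 < μ w) (hbx : ¬Reaches p b x) : p w b = 0 := by
  classical
  set C : Finset S := {z | Reaches p z x}
  have hin (z : S) (hz : z ∈ C) : ∑ v ∈ C, μ v * p v z = μ z := by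
    rw [← hstat z]
    refine sum_subset (subset_univ C) fun v _ hv => ?_
    by_contra hne
    have hvz : 0 < p v z := (hp v z).lt_of_ne' (right_ne_zero_of_mul hne)
    exact hv (mem_filter.2 ⟨mem_univ v, .head hvz (mem_filter.1 hz).2⟩)
  have hle (v : S) (_ : v ∈ C) : μ v * ∑ z ∈ C, p v z ≤ μ v :=
    mul_le_of_le_one_right (hμ0 v) <| (hrow v).symm ▸
      sum_le_sum_of_subset_of_nonneg (subset_univ C) fun z _ _ => hp v z
  have hmass : ∑ v ∈ C, μ v * ∑ z ∈ C, p v z = ∑ v ∈ C, μ v := by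
    simp_rw [mul_sum]
    rw [sum_comm]
    exact sum_congr rfl hin
  have hstay : ∑ z ∈ C, p w z = 1 :=
    (mul_eq_left₀ hw.ne').1 ((sum_eq_sum_iff_of_le hle).1 hmass w (mem_filter.2 ⟨mem_univ w, hwx⟩))
  have hleave : ∑ z ∈ Cᶜ, p w z = 0 := by
    linarith [sum_add_sum_compl C (p w), hrow w]
  exact (sum_eq_zero_iff_of_nonneg fun z _ => hp w z).1 hleave b
    (mem_compl.2 fun hb => hbx (mem_filter.1 hb).2)

lemma essentialState_of_stationary (hp : ∀ x y, 0 ≤ p x y) (hrow : ∀ x, ∑ y, p x y = 1)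
    (hμ0 : ∀ x, 0 ≤ μ x) (hstat : ∀ y, ∑ x, μ x * p x y = μ y) {x : S} (hx : 0 < μ x) :
    EssentialState p x := by
  intro y hxy
  suffices 0 < μ y ∧ Reaches p y x from this.2
  induction hxy with
  | refl => exact ⟨hx, .refl⟩
  | @tail b c _ hbc ih =>
    refine ⟨pos_of_reaches hp hμ0 hstat (.single hbc) ih.1, ?_⟩
    by_contra hcx
    exact hbc.ne' (transition_eq_zero_of_stationary hp hrow hμ0 hstat ih.2 ih.1 hcx)

end Essential

section PrefixFree

variable [Fintype S] [DecidableEq S]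

lemma sum_pathProb_extensions (hrow : ∀ x, ∑ y, p x y = 1) :
    ∀ (N : ℕ) (z : S) (l : List S), l.length ≤ N →
      ∑ f : Fin N → S, (if l <+: List.ofFn f then pathProb p (z :: List.ofFn f) else 0) =
        pathProb p (z :: l)
  | 0, z, l, hl => by simp [List.length_eq_zero_iff.mp (Nat.le_zero.mp hl), pathProb]
  | N + 1, z, [], _ => by
    have hmass (w : S) := sum_pathProb_extensions hrow N w [] (Nat.zero_le _)
    simp only [List.nil_prefix, if_true] at hmass ⊢
    simp [Fin.sum_univ_pi_succ, hmass, ← mul_sum, hrow, pathProb]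
  | N + 1, z, c :: l, hl => by
    simp only [Fin.sum_univ_pi_succ, List.ofFn_succ, Fin.cons_zero, Fin.cons_succ,
      List.cons_prefix_cons, pathProb_cons_cons, ite_and]
    rw [sum_eq_single c (fun w _ hw => by simp [hw.symm]) (by simp)]
    simp only [if_true, ← mul_ite_zero, ← mul_sum]
    rw [sum_pathProb_extensions hrow N c l (by simpa using hl)]

lemma sum_indicator_pathProb_le_one (hp : ∀ x y, 0 ≤ p x y) (hrow : ∀ x, ∑ y, p x y = 1)
    {L : Set (List S)} (hL : IsAntichain (· <+: ·) L) (z : S) (Γ : Finset (List S)) :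
    ∑ l ∈ Γ, L.indicator (fun l => pathProb p (z :: l)) l ≤ 1 := by
  classical
  rw [sum_indicator_eq_sum_filter]
  set Γ' := {l ∈ Γ | l ∈ L}
  have hΓ' (l : List S) (hl : l ∈ Γ') : l ∈ L := (mem_filter.1 hl).2
  set N := Γ'.sup List.length
  have hprefixes (m : List S) : #{l ∈ Γ' | l <+: m} ≤ 1 := by
    refine card_le_one.2 fun l₁ h₁ l₂ h₂ => ?_
    rw [mem_filter] at h₁ h₂
    rcases List.prefix_or_prefix_of_prefix h₁.2 h₂.2 with h | h
    · exact hL.eq (hΓ' _ h₁.1) (hΓ' _ h₂.1) h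
    · exact (hL.eq (hΓ' _ h₂.1) (hΓ' _ h₁.1) h).symm
  calc ∑ l ∈ Γ', pathProb p (z :: l)
      = ∑ l ∈ Γ', ∑ f : Fin N → S,
          if l <+: List.ofFn f then pathProb p (z :: List.ofFn f) else 0 :=
        sum_congr rfl fun l hl => (sum_pathProb_extensions hrow N z l (le_sup hl)).symm
    _ = ∑ f : Fin N → S, #{l ∈ Γ' | l <+: List.ofFn f} * pathProb p (z :: List.ofFn f) := by
        rw [sum_comm]
        simp only [sum_ite, sum_const_zero, add_zero, sum_const, nsmul_eq_mul]
    _ ≤ ∑ f : Fin N → S, pathProb p (z :: List.ofFn f) := by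
        gcongr with f
        exact mul_le_of_le_one_left (pathProb_nonneg hp _) (mod_cast hprefixes _)
    _ = 1 := by simpa [pathProb] using sum_pathProb_extensions hrow N z [] (Nat.zero_le _)

lemma summable_indicator_pathProb (hp : ∀ x y, 0 ≤ p x y) (hrow : ∀ x, ∑ y, p x y = 1)
    {L : Set (List S)} (hL : IsAntichain (· <+: ·) L) (z : S) :
    Summable (L.indicator fun l => pathProb p (z :: l)) :=
  summable_of_sum_le (fun l => Set.indicator_nonneg (fun _ _ => pathProb_nonneg hp _) l)
    (sum_indicator_pathProb_le_one hp hrow hL z)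

lemma tsum_indicator_pathProb_le_one (hp : ∀ x y, 0 ≤ p x y) (hrow : ∀ x, ∑ y, p x y = 1)
    {L : Set (List S)} (hL : IsAntichain (· <+: ·) L) (z : S) :
    ∑' l, L.indicator (fun l => pathProb p (z :: l)) l ≤ 1 :=
  (summable_indicator_pathProb hp hrow hL z).tsum_le_of_sum_le
    (sum_indicator_pathProb_le_one hp hrow hL z)

end PrefixFree

/-- The tails `l` such that the trajectory `z :: l` enters `A`, at a positive time, first at `t`. -/
def firstHitTails (A : Finset S) (t : S) : Set (List S) :=
  {l | l.getLast? = some t ∧ ∀ a ∈ l.dropLast, a ∉ A}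

lemma cons_mem_firstHitTails_iff {A : Finset S} {t w : S} {l : List S} :
    w :: l ∈ firstHitTails A t ↔ (l = [] ∧ w = t) ∨ (w ∉ A ∧ l ∈ firstHitTails A t) := by
  cases l with
  | nil => simp [firstHitTails, eq_comm]
  | cons b m => simp [firstHitTails, and_left_comm]

lemma isAntichain_biUnion_firstHitTails (A : Finset S) :
    IsAntichain (· <+: ·) (⋃ t ∈ A, firstHitTails A t) := by
  intro l₁ h₁ l₂ h₂ hne hpre
  simp only [Set.mem_iUnion, exists_prop] at h₁ h₂
  obtain ⟨t, htA, hlast, -⟩ := h₁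
  obtain ⟨-, -, -, havoid⟩ := h₂
  exact havoid t ((hpre.dropLast_of_ne hne).subset (List.mem_of_getLast? hlast)) htA

lemma pairwiseDisjoint_firstHitTails (A : Finset S) :
    (A : Set S).PairwiseDisjoint (firstHitTails A) := by
  intro t₁ _ t₂ _ hne
  refine Set.disjoint_left.2 fun l h₁ h₂ => hne ?_
  exact Option.some_injective _ (h₁.1.symm.trans h₂.1)

variable (p) in
/-- `Pᶻ(X_σ = t)`, where `σ` is the first positive time at which the chain is in `A`. -/
noncomputable def firstHitProb (A : Finset S) (z t : S) : ℝ :=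
  ∑' l, (firstHitTails A t).indicator (fun l => pathProb p (z :: l)) l

lemma firstHitProb_nonneg (hp : ∀ x y, 0 ≤ p x y) (A : Finset S) (z t : S) :
    0 ≤ firstHitProb p A z t :=
  tsum_nonneg fun _ => Set.indicator_nonneg (fun _ _ => pathProb_nonneg hp _) _

lemma hitBeforeReturn_eq_firstHitProb [DecidableEq S] (x y : S) :
    hitBeforeReturn p x y = firstHitProb p {x, y} x y := by
  have hcons (l : List S) : FirstHitPath x y (x :: l) ↔ l ∈ firstHitTails {x, y} y := by
    cases l with
    | nil => simp [FirstHitPath, firstHitTails]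
    | cons b m => simp [FirstHitPath, firstHitTails]
  have hsupp : Function.support ({γ | FirstHitPath x y γ}.indicator (pathProb p)) ⊆
      Set.range (List.cons x) := by
    rintro (_ | ⟨a, l⟩) h <;> obtain ⟨hhead, -⟩ := Set.mem_of_indicator_ne_zero h
    · simp at hhead
    · exact ⟨l, by simpa using hhead.symm⟩
  calc hitBeforeReturn p x y = ∑' γ, {γ | FirstHitPath x y γ}.indicator (pathProb p) γ :=
        tsum_subtype {γ | FirstHitPath x y γ} (pathProb p)
    _ = firstHitProb p {x, y} x y := by
        rw [← List.cons_injective.tsum_eq hsupp, firstHitProb]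
        congr 1 with l
        by_cases hl : l ∈ firstHitTails {x, y} y <;> simp [hl, hcons]

section FirstStep

variable [DecidableEq S]

variable (p) in
/-- `firstHitProb` with time `0` allowed: a chain started in `A` is already there. -/
noncomputable def firstHitProb₀ (A : Finset S) (w t : S) : ℝ :=
  if w ∈ A then (if w = t then 1 else 0) else firstHitProb p A w t

lemma firstHitProb₀_nonneg (hp : ∀ x y, 0 ≤ p x y) (A : Finset S) (w t : S) :
    0 ≤ firstHitProb₀ p A w t := by
  unfold firstHitProb₀
  split_ifs
  exacts [zero_le_one, le_rfl, firstHitProb_nonneg hp A w t]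

lemma tsum_firstHitTails_cons {A : Finset S} {t : S} (ht : t ∈ A) (z w : S) :
    ∑' l, (firstHitTails A t).indicator (fun l => pathProb p (z :: l)) (w :: l) =
      p z w * firstHitProb₀ p A w t := by
  by_cases hw : w ∈ A
  · have hmem (l : List S) : w :: l ∈ firstHitTails A t ↔ l = [] ∧ w = t := by
      simp [cons_mem_firstHitTails_iff, hw]
    simp only [firstHitProb₀, hw, if_true, Set.indicator, hmem, ite_and, pathProb_cons_cons]
    rw [tsum_ite_eq]
    split_ifs <;> simp [pathProb]
  · have hmem (l : List S) : w :: l ∈ firstHitTails A t ↔ l ∈ firstHitTails A t := by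
      simp [cons_mem_firstHitTails_iff, hw, show w ≠ t by rintro rfl; exact hw ht]
    simp only [firstHitProb₀, hw, if_false, firstHitProb, ← tsum_mul_left]
    congr 1 with l
    by_cases hl : l ∈ firstHitTails A t <;> simp [hl, hmem]

variable [Fintype S]

lemma summable_firstHitTails (hp : ∀ x y, 0 ≤ p x y) (hrow : ∀ x, ∑ y, p x y = 1)
    {A : Finset S} {t : S} (ht : t ∈ A) (z : S) :
    Summable ((firstHitTails A t).indicator fun l => pathProb p (z :: l)) :=
  summable_indicator_pathProb hp hrow
    ((isAntichain_biUnion_firstHitTails A).subset (Set.subset_biUnion_of_mem ht)) z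

lemma sum_firstHitProb_le_one (hp : ∀ x y, 0 ≤ p x y) (hrow : ∀ x, ∑ y, p x y = 1)
    (A : Finset S) (z : S) : ∑ t ∈ A, firstHitProb p A z t ≤ 1 := by
  unfold firstHitProb
  rw [← Summable.tsum_finsetSum fun t ht => summable_firstHitTails hp hrow ht z]
  simp_rw [← indicator_biUnion_apply A _ (pairwiseDisjoint_firstHitTails A)]
  exact tsum_indicator_pathProb_le_one hp hrow (isAntichain_biUnion_firstHitTails A) z

lemma firstHitProb_eq_sum (hp : ∀ x y, 0 ≤ p x y) (hrow : ∀ x, ∑ y, p x y = 1)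
    {A : Finset S} {t : S} (ht : t ∈ A) (z : S) :
    firstHitProb p A z t = ∑ w, p z w * firstHitProb₀ p A w t := by
  set F := (firstHitTails A t).indicator fun l => pathProb p (z :: l)
  have hcons : Function.Injective fun wl : S × List S => wl.1 :: wl.2 :=
    fun _ _ h => Prod.ext_iff.2 (List.cons.inj h)
  have hsupp : Function.support F ⊆ Set.range fun wl : S × List S => wl.1 :: wl.2 := by
    rintro (_ | ⟨w, l⟩) h
    · exact absurd (Set.indicator_of_notMem (by simp [firstHitTails]) _) h
    · exact ⟨(w, l), rfl⟩
  have hF : Summable fun wl : S × List S => F (wl.1 :: wl.2) :=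
    (summable_firstHitTails hp hrow ht z).comp_injective hcons
  calc firstHitProb p A z t = ∑' wl : S × List S, F (wl.1 :: wl.2) := (hcons.tsum_eq hsupp).symm
    _ = ∑ w, ∑' l, F (w :: l) := by rw [hF.tsum_prod, tsum_fintype]
    _ = ∑ w, p z w * firstHitProb₀ p A w t :=
        sum_congr rfl fun w _ => tsum_firstHitTails_cons ht z w

lemma firstHitProb_pos_of_step (hp : ∀ x y, 0 ≤ p x y) (hrow : ∀ x, ∑ y, p x y = 1)
    {A : Finset S} {t w u : S} (ht : t ∈ A) (hwu : 0 < p w u) (hu : 0 < firstHitProb₀ p A u t) :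
    0 < firstHitProb p A w t := by
  rw [firstHitProb_eq_sum hp hrow ht]
  exact (mul_pos hwu hu).trans_le <| single_le_sum
    (fun v _ => mul_nonneg (hp w v) (firstHitProb₀_nonneg hp A v t)) (mem_univ u)

lemma sum_mul_firstHitProb_of_stationary (hp : ∀ x y, 0 ≤ p x y)
    (hrow : ∀ x, ∑ y, p x y = 1) (hstat : ∀ y, ∑ x, μ x * p x y = μ y) {A : Finset S} {t : S}
    (ht : t ∈ A) :
    ∑ a ∈ A, μ a * firstHitProb p A a t = μ t := by
  have hflow : ∑ z, μ z * firstHitProb p A z t = ∑ w, μ w * firstHitProb₀ p A w t :=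
    calc ∑ z, μ z * firstHitProb p A z t = ∑ z, ∑ w, μ z * p z w * firstHitProb₀ p A w t := by
          simp_rw [firstHitProb_eq_sum hp hrow ht, mul_sum, mul_assoc]
      _ = ∑ w, μ w * firstHitProb₀ p A w t := by
          rw [sum_comm]
          simp_rw [← sum_mul, hstat]
  have houtside : ∑ w ∈ Aᶜ, μ w * firstHitProb p A w t = ∑ w ∈ Aᶜ, μ w * firstHitProb₀ p A w t :=
    sum_congr rfl fun w hw => by rw [firstHitProb₀, if_neg (mem_compl.1 hw)]
  have hinside : ∑ w ∈ A, μ w * firstHitProb₀ p A w t = μ t := by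
    rw [sum_congr rfl fun w hw => by rw [firstHitProb₀, if_pos hw, mul_ite, mul_one, mul_zero],
      sum_ite_eq' A t μ, if_pos ht]
  rw [← sum_add_sum_compl A, ← sum_add_sum_compl A, houtside] at hflow
  linarith

end FirstStep

lemma hitBeforeReturn_pos [Fintype S] (hp : ∀ x y, 0 ≤ p x y) (hrow : ∀ x, ∑ y, p x y = 1)
    {x y : S} (hne : x ≠ y) (hxy : Reaches p x y) : 0 < hitBeforeReturn p x y := by
  classical
  rw [hitBeforeReturn_eq_firstHitProb]
  have hy : y ∈ ({x, y} : Finset S) := by simp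
  suffices ∀ w, Reaches p w y →
      0 < firstHitProb₀ p {x, y} w y ∨ 0 < firstHitProb p {x, y} x y by
    simpa [firstHitProb₀, hne] using this x hxy
  intro w hwy
  induction hwy using Relation.ReflTransGen.head_induction_on with
  | refl => simp [firstHitProb₀]
  | @head w u hwu _ ih =>
    rcases ih with hu | hx
    · have hw := firstHitProb_pos_of_step hp hrow hy hwu hu
      by_cases hwx : w = x
      · exact .inr (hwx ▸ hw)
      · by_cases hwy : w = y
        · simp [firstHitProb₀, hwy]
        · exact .inl (by simpa [firstHitProb₀, hwx, hwy] using hw)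
    · exact .inr hx

/-- With `h = firstHitProb p {x, y}`, the exit identities `μ x h(x,y) = μ y (1 - h(y,y))` and
`μ y h(y,x) = μ x (1 - h(x,x))` combined with `h(y,x) + h(y,y) ≤ 1` and `h(x,x) + h(x,y) ≤ 1`
give both inequalities. -/
lemma balance_of_stationary [Fintype S] (hp : ∀ x y, 0 ≤ p x y) (hrow : ∀ x, ∑ y, p x y = 1)
    (hμ0 : ∀ x, 0 ≤ μ x) (hstat : ∀ y, ∑ x, μ x * p x y = μ y) (x y : S) :
    μ x * hitBeforeReturn p x y = μ y * hitBeforeReturn p y x := by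
  classical
  rcases eq_or_ne x y with rfl | hne
  · rfl
  rw [hitBeforeReturn_eq_firstHitProb, hitBeforeReturn_eq_firstHitProb, Finset.pair_comm y x]
  have exit_y := sum_mul_firstHitProb_of_stationary hp hrow hstat (A := {x, y}) (t := y) (by simp)
  have exit_x := sum_mul_firstHitProb_of_stationary hp hrow hstat (A := {x, y}) (t := x) (by simp)
  have hx := sum_firstHitProb_le_one hp hrow {x, y} x
  have hy := sum_firstHitProb_le_one hp hrow {x, y} y
  rw [sum_pair hne] at exit_x exit_y hx hy
  nlinarith [hμ0 x, hμ0 y, mul_nonneg (hμ0 x) (sub_nonneg.2 hx),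
    mul_nonneg (hμ0 y) (sub_nonneg.2 hy)]

lemma exists_stationary_of_stochastic {ι : Type*} [Fintype ι] [DecidableEq ι] [Nonempty ι]
    (q : ι → ι → ℝ) (hq : ∀ i j, 0 ≤ q i j) (hrow : ∀ i, ∑ j, q i j = 1) :
    ∃ π : ι → ℝ, (∀ i, 0 ≤ π i) ∧ ∑ i, π i = 1 ∧ ∀ j, ∑ i, π i * q i j = π j := by
  set M : Matrix ι ι ℝ := Matrix.of q - 1
  have hdet : M.transpose.det = 0 := by
    rw [Matrix.det_transpose, ← Matrix.exists_mulVec_eq_zero_iff]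
    refine ⟨1, one_ne_zero, ?_⟩
    rw [Matrix.sub_mulVec, Matrix.one_mulVec, sub_eq_zero]
    ext i
    simp [Matrix.mulVec, dotProduct, hrow]
  obtain ⟨v, hv0, hv⟩ := Matrix.exists_mulVec_eq_zero_iff.2 hdet
  have hvstat (j : ι) : ∑ i, v i * q i j = v j := by
    have := congrFun hv j
    rw [Matrix.mulVec_transpose, Matrix.vecMul_sub, Matrix.vecMul_one] at this
    exact sub_eq_zero.1 this
  -- `|v|` is subinvariant, `|v| ≤ |v| q`, with the same total mass, hence invariant.
  have hle (j : ι) (_ : j ∈ univ) : |v j| ≤ ∑ i, |v i| * q i j := by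
    rw [← hvstat j]
    refine (abs_sum_le_sum_abs _ _).trans_eq (sum_congr rfl fun i _ => ?_)
    rw [abs_mul, abs_of_nonneg (hq i j)]
  have hmass : ∑ j, |v j| = ∑ j, ∑ i, |v i| * q i j := by
    rw [sum_comm]
    simp_rw [← mul_sum, hrow, mul_one]
  have habs := (sum_eq_sum_iff_of_le hle).1 hmass
  obtain ⟨k, hk⟩ := Function.ne_iff.1 hv0
  have hpos : 0 < ∑ i, |v i| :=
    sum_pos' (fun i _ => abs_nonneg _) ⟨k, mem_univ k, abs_pos.2 hk⟩
  refine ⟨fun i => |v i| / ∑ i, |v i|, fun i => by positivity, ?_, fun j => ?_⟩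
  · rw [← sum_div, div_self hpos.ne']
  · simp_rw [div_mul_eq_mul_div, ← sum_div, ← habs j (mem_univ j)]

lemma exists_stationary_supported_reaches [Fintype S] (hp : ∀ x y, 0 ≤ p x y)
    (hrow : ∀ x, ∑ y, p x y = 1) (z : S) :
    ∃ π : S → ℝ, (∀ w, 0 ≤ π w) ∧ ∑ w, π w = 1 ∧ (∀ y, ∑ x, π x * p x y = π y) ∧
      ∀ w, π w ≠ 0 → Reaches p z w := by
  classical
  have hclosed {a b : S} (ha : Reaches p z a) (hb : ¬Reaches p z b) : p a b = 0 :=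
    (hp a b).eq_or_lt.resolve_right (fun hab => hb (ha.tail hab)) |>.symm
  have hrowC (a : {w // Reaches p z w}) : ∑ b : {w // Reaches p z w}, p a b = 1 := by
    have hsplit := Fintype.sum_subtype_add_sum_subtype (Reaches p z) (p a)
    have hout : ∑ b : {w // ¬Reaches p z w}, p a b = 0 := sum_eq_zero fun b _ => hclosed a.2 b.2
    linarith [hrow a]
  have : Nonempty {w // Reaches p z w} := ⟨⟨z, .refl⟩⟩
  obtain ⟨π, hπ0, hπ1, hπ⟩ :=
    exists_stationary_of_stochastic (fun a b : {w // Reaches p z w} => p a b)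
      (fun _ _ => hp _ _) hrowC
  set π' : S → ℝ := fun w => if h : Reaches p z w then π ⟨w, h⟩ else 0
  have hsum (g : S → ℝ) : ∑ w, π' w * g w = ∑ a : {w // Reaches p z w}, π a * g a := by
    have hin (a : {w // Reaches p z w}) : π' a * g a = π a * g a := by simp [π', a.2]
    have hout (b : {w // ¬Reaches p z w}) : π' b * g b = 0 := by simp [π', b.2]
    rw [← Fintype.sum_subtype_add_sum_subtype (Reaches p z)]
    simp only [hin, hout, sum_const_zero, add_zero]
  refine ⟨π', fun w => ?_, by simpa [hπ1] using hsum 1, fun y => ?_, fun w hw => ?_⟩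
  · by_cases h : Reaches p z w <;> simp [π', h, hπ0]
  · rw [hsum]
    by_cases hy : Reaches p z y
    · simpa [π', hy] using hπ ⟨y, hy⟩
    · simp only [π', dif_neg hy]
      exact sum_eq_zero fun a _ => by rw [hclosed a.2 hy, mul_zero]
  · by_contra h
    simp [π', h] at hw

section Converse

variable [Fintype S]

lemma mul_eq_mul_of_balanced (hp : ∀ x y, 0 ≤ p x y) (hrow : ∀ x, ∑ y, p x y = 1) {π : S → ℝ}
    (hμ : ∀ x y, μ x * hitBeforeReturn p x y = μ y * hitBeforeReturn p y x)
    (hπ : ∀ x y, π x * hitBeforeReturn p x y = π y * hitBeforeReturn p y x)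
    {z x : S} (hzx : Reaches p z x) : μ x * π z = μ z * π x := by
  rcases eq_or_ne z x with rfl | hne
  · rfl
  refine mul_right_cancel₀ (hitBeforeReturn_pos hp hrow hne hzx).ne' ?_
  linear_combination μ x * hπ z x - π x * hμ z x

lemma stationary_of_essential_of_balanced (hp : ∀ x y, 0 ≤ p x y) (hrow : ∀ x, ∑ y, p x y = 1)
    (hμ0 : ∀ x, 0 ≤ μ x) (hess : ∀ x, 0 < μ x → EssentialState p x)
    (hbal : ∀ x y, μ x * hitBeforeReturn p x y = μ y * hitBeforeReturn p y x) (y : S) :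
    ∑ x, μ x * p x y = μ y := by
  have hno_flow {x : S} (h : 0 < μ x → 0 < p x y → False) : μ x * p x y = 0 := by
    by_contra hne
    obtain ⟨hx, hxy⟩ := mul_ne_zero_iff.1 hne
    exact h ((hμ0 x).lt_of_ne' hx) ((hp x y).lt_of_ne' hxy)
  by_cases hy : ∀ z, 0 < μ z → ¬Reaches p z y
  · rw [sum_eq_zero fun x _ => hno_flow fun hx hxy => hy x hx (.single hxy)]
    exact (hμ0 y).eq_or_lt.resolve_right fun h => hy y h .refl
  push Not at hy
  obtain ⟨z, hz, hzy⟩ := hy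
  obtain ⟨π, hπ0, hπ1, hπstat, hπsupp⟩ := exists_stationary_supported_reaches hp hrow z
  have hπz : 0 < π z := by
    obtain ⟨w, hw⟩ : ∃ w, π w ≠ 0 := by
      by_contra! h
      simp [h] at hπ1
    exact pos_of_reaches hp hπ0 hπstat (hess z hz w (hπsupp w hw)) ((hπ0 w).lt_of_ne' hw)
  have hprop {x : S} (hzx : Reaches p z x) : μ x = μ z / π z * π x := by
    rw [div_mul_eq_mul_div, eq_div_iff hπz.ne']
    exact mul_eq_mul_of_balanced hp hrow hbal (balance_of_stationary hp hrow hπ0 hπstat) hzx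
  have hterm (x : S) : μ x * p x y = μ z / π z * (π x * p x y) := by
    by_cases hzx : Reaches p z x
    · rw [hprop hzx, mul_assoc]
    · rw [of_not_not (mt (hπsupp x) hzx), zero_mul, mul_zero]
      exact hno_flow fun hx hxy => hzx (hzy.trans (hess x hx y (.single hxy)))
  rw [sum_congr rfl fun x _ => hterm x, ← mul_sum, hπstat, hprop hzy]

end Converse

end

theorem stationary_iff_essential_support_and_balance_general
    {S : Type*} [Fintype S] (p : S → S → ℝ)
    (hp : ∀ x y, 0 ≤ p x y) (hrow : ∀ x, ∑ y, p x y = 1)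
    (μ : S → ℝ) (hμ0 : ∀ x, 0 ≤ μ x) :
    (∀ y, ∑ x, μ x * p x y = μ y) ↔
      ((∀ x, 0 < μ x → EssentialState p x) ∧
       ∀ x y, μ x * hitBeforeReturn p x y = μ y * hitBeforeReturn p y x) := by
  constructor
  · intro hstat
    exact ⟨fun _ hx => essentialState_of_stationary hp hrow hμ0 hstat hx,
      balance_of_stationary hp hrow hμ0 hstat⟩
  · rintro ⟨hess, hbal⟩
    exact stationary_of_essential_of_balanced hp hrow hμ0 hess hbal

theorem stationary_iff_essential_support_and_balance
    {S : Type*} [Fintype S] (p : S → S → ℝ)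
    (hp : ∀ x y, 0 ≤ p x y) (hrow : ∀ x, ∑ y, p x y = 1)
    (μ : S → ℝ) (hμ0 : ∀ x, 0 ≤ μ x) (hμ1 : ∑ x, μ x = 1) :
    (∀ y, ∑ x, μ x * p x y = μ y) ↔
      ((∀ x, 0 < μ x → EssentialState p x) ∧
       ∀ x y, μ x * hitBeforeReturn p x y = μ y * hitBeforeReturn p y x) :=
  stationary_iff_essential_support_and_balance_general p hp hrow μ hμ0
end

section
/- Let p be a Markov chain on finite state space S and S̃ ⊆ S. Define the induced chain p̃ on S̃ by p̃(x,y) := Pˣ(X_{τ⁺_{S̃}} = y), the probability that the first return to S̃ from x lands at y. Then for all x, y ∈ S̃, the probability of hitting y before returning to x is the same in both chains: Pˣ(τ_y < τ⁺_x) = P̃ˣ(τ_y < τ⁺_x). -/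
/-- `Pˣ(τ_y < τ⁺_x)` (note `τ_y = 0` when started at `y`). -/
noncomputable def hitBefore {S : Type*} [DecidableEq S] (p : S → S → ℝ) (x y : S) : ℝ :=
  if x = y then 1 else hitBeforeReturn p x y

/-- The transition probability `p̃ x y = Pˣ(X_{τ⁺_{S̃}} = y)` of the chain
induced on `S̃`: first positive return to `S̃` lands at `y`. -/
noncomputable def inducedTrans {S : Type*} (p : S → S → ℝ) (T : Set S)
    (a b : T) : ℝ :=
  ∑' γ : {γ : List S // γ.head? = some a.1 ∧ γ.getLast? = some b.1 ∧
      2 ≤ γ.length ∧ ∀ z ∈ (γ.drop 1).dropLast, z ∉ T},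
    pathProb p γ.1

/-!
Everything is done with path weights in `ℝ≥0∞`, where sums can be regrouped freely. A path from
`a` that reaches `b` before returning to `a` and meets `T` at `n + 1` positive times cuts uniquely,
at those times, into `n + 1` first-entry paths into `T`; the weights of the first-entry paths
between two given states of `T` add up to the induced kernel. Hence, stratified by `n`, the hitting
weights of both chains obey the same recursion (the induced chain on `T` is the chain induced by
itself on all of `T`), and they agree. Kraft's inequality for prefix-free sets of paths bounds
the induced kernel by `1`, which is what allows passing between the real sums and `ℝ≥0∞`.
-/

open scoped ENNReal

namespace InducedChain

variable {S : Type*}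

lemma append_cons_inj_of_forall_not {p : S → Prop} {u u' v v' : List S} {d d' : S}
    (hu : ∀ z ∈ u, ¬p z) (hu' : ∀ z ∈ u', ¬p z) (hd : p d) (hd' : p d')
    (h : u ++ d :: v = u' ++ d' :: v') : u = u' ∧ d = d' ∧ v = v' := by
  induction u generalizing u' with
  | nil =>
    simp only [List.nil_append] at h
    cases u' with
    | nil => simpa using h
    | cons z' u' =>
      obtain ⟨rfl, -⟩ := List.cons.inj (h.trans (List.cons_append ..))
      exact absurd hd (hu' d List.mem_cons_self)
  | cons z u ih =>
    cases u' with
    | nil =>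
      obtain ⟨rfl, -⟩ := List.cons.inj h
      exact absurd hd' (hu _ List.mem_cons_self)
    | cons z' u' =>
      simp only [List.cons_append, List.cons.injEq] at h
      obtain ⟨rfl, h⟩ := h
      obtain ⟨rfl, hdv⟩ := ih (fun y hy => hu y (List.mem_cons_of_mem _ hy))
        (fun y hy => hu' y (List.mem_cons_of_mem _ hy)) h
      exact ⟨rfl, hdv⟩

lemma exists_eq_append_cons_of_exists_mem {p : S → Prop} [DecidablePred p] {w : List S}
    (h : ∃ z ∈ w, p z) : ∃ u d v, w = u ++ d :: v ∧ (∀ z ∈ u, ¬p z) ∧ p d := by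
  obtain ⟨d, hd⟩ :=
    Option.isSome_iff_exists.mp (List.find?_isSome (p := (p ·)).mpr (by simpa using h))
  obtain ⟨hpd, u, v, rfl, hu⟩ := List.find?_eq_some_iff_append.mp hd
  exact ⟨u, d, v, rfl, fun z hz => by simpa using hu z hz, by simpa using hpd⟩

noncomputable def pathWeight (q : S → S → ℝ≥0∞) : List S → ℝ≥0∞
  | [] => 1
  | [_] => 1
  | a :: b :: l => q a b * pathWeight q (b :: l)

section PathWeight

variable (q : S → S → ℝ≥0∞)

@[simp] lemma pathWeight_singleton (a : S) : pathWeight q [a] = 1 := rfl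

@[simp] lemma pathWeight_cons_cons (a b : S) (l : List S) :
    pathWeight q (a :: b :: l) = q a b * pathWeight q (b :: l) := rfl

lemma pathWeight_cons_append_cons (c d : S) (u t : List S) :
    pathWeight q (c :: (u ++ d :: t)) = pathWeight q (c :: (u ++ [d])) * pathWeight q (d :: t) := by
  induction u generalizing c with
  | nil => simp
  | cons e u ih => simp [ih, mul_assoc]

lemma sum_eq_sum_sum_cons [Fintype S] {M : Type*} [AddCommMonoid M] {F : Finset (List S)}
    (hF : [] ∉ F) (f : List S → M) :
    ∑ γ ∈ F, f γ = ∑ d, ∑ γ ∈ F.preimage (d :: ·) List.cons_injective.injOn, f (d :: γ) := by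
  rw [Finset.sum_sigma']
  refine (Finset.sum_nbij (fun x : Σ _ : S, List S => x.1 :: x.2) (by simp) ?_ ?_
    (fun _ _ => rfl)).symm
  · rintro ⟨d, γ⟩ - ⟨d', γ'⟩ - h
    obtain ⟨rfl, rfl⟩ := List.cons.inj h
    rfl
  · rintro (_ | ⟨d, γ⟩) hγ
    · exact absurd hγ hF
    · exact ⟨⟨d, γ⟩, by simpa using hγ, rfl⟩

/-- Kraft's inequality, for a substochastic kernel. -/
theorem sum_pathWeight_cons_le_one [Fintype S] (hq : ∀ x, ∑ y, q x y ≤ 1) (c : S)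
    {F : Finset (List S)} (hF : IsAntichain (· <+: ·) (F : Set (List S))) :
    ∑ γ ∈ F, pathWeight q (c :: γ) ≤ 1 := by
  have h_sub_nil : ∀ (c : S) (F : Finset (List S)), F ⊆ {[]} →
      ∑ γ ∈ F, pathWeight q (c :: γ) ≤ 1 := fun c F hF =>
    (Finset.sum_le_sum_of_subset hF).trans (by simp)
  suffices ∀ N c (F : Finset (List S)), (∀ γ ∈ F, γ.length ≤ N) →
      IsAntichain (· <+: ·) (F : Set (List S)) → ∑ γ ∈ F, pathWeight q (c :: γ) ≤ 1 from
    this _ c F (fun γ hγ => Finset.le_sup (f := List.length) hγ) hF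
  intro N
  induction N with
  | zero =>
    refine fun c F hlen _ => h_sub_nil c F fun γ hγ => ?_
    simpa using hlen γ hγ
  | succ N ih =>
    intro c F hlen hF
    by_cases hnil : [] ∈ F
    · refine h_sub_nil c F fun γ hγ => ?_
      by_contra hne
      exact hF hnil hγ (Ne.symm (by simpa using hne)) List.nil_prefix
    rw [sum_eq_sum_sum_cons hnil]
    calc ∑ d, ∑ γ ∈ F.preimage (d :: ·) List.cons_injective.injOn, pathWeight q (c :: d :: γ)
        = ∑ d, q c d *
            ∑ γ ∈ F.preimage (d :: ·) List.cons_injective.injOn, pathWeight q (d :: γ) := by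
          simp only [pathWeight_cons_cons, Finset.mul_sum]
      _ ≤ ∑ d, q c d * 1 := by
          gcongr with d
          refine ih d _ (fun γ hγ => ?_) ?_
          · simpa using hlen _ (Finset.mem_preimage.mp hγ)
          · rw [Finset.coe_preimage]
            exact hF.preimage List.cons_injective (fun _ _ h => List.cons_prefix_cons.mpr ⟨rfl, h⟩)
      _ ≤ 1 := by simpa using hq c

end PathWeight

/-- `FirstHitPath` and the paths summed in `inducedTrans` are instances of this. -/
def IsPathWithin (P : S → Prop) (x y : S) (γ : List S) : Prop :=
  γ.head? = some x ∧ γ.getLast? = some y ∧ 2 ≤ γ.length ∧ ∀ z ∈ (γ.drop 1).dropLast, P z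

lemma isPathWithin_iff {P : S → Prop} {x y : S} {γ : List S} :
    IsPathWithin P x y γ ↔ ∃ w, (∀ z ∈ w, P z) ∧ x :: (w ++ [y]) = γ := by
  constructor
  · rintro ⟨hx, hy, hlen, hP⟩
    obtain _ | ⟨x', l⟩ := γ
    · simp at hx
    obtain rfl : x' = x := by simpa using hx
    have hl : l.getLast? = some y := by
      obtain _ | ⟨z, l⟩ := l
      · simp at hlen
      · simpa [List.getLast?_cons_cons] using hy
    refine ⟨l.dropLast, fun z hz => hP z (by simpa using hz), ?_⟩
    rw [List.dropLast_append_getLast? y hl]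
  · rintro ⟨w, hw, rfl⟩
    refine ⟨rfl, by simp [List.getLast?_cons], by simp, ?_⟩
    simpa using hw

lemma tsum_isPathWithin {M : Type*} [AddCommMonoid M] [TopologicalSpace M] (P : S → Prop)
    (x y : S) (f : List S → M) :
    ∑' γ : {γ // IsPathWithin P x y γ}, f γ =
      ∑' w : {w // ∀ z ∈ w, P z}, f (x :: (w.1 ++ [y])) := by
  let g : {w // ∀ z ∈ w, P z} → {γ // IsPathWithin P x y γ} :=
    fun w => ⟨x :: (w.1 ++ [y]), isPathWithin_iff.mpr ⟨w.1, w.2, rfl⟩⟩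
  have hg : Function.Bijective g := by
    refine ⟨fun w w' h => Subtype.ext ?_, fun γ => ?_⟩
    · simpa [g] using h
    · obtain ⟨w, hw, h⟩ := isPathWithin_iff.mp γ.2
      exact ⟨⟨w, hw⟩, Subtype.ext h⟩
  exact ((Equiv.ofBijective g hg).tsum_eq (fun γ => f γ.1)).symm

section Weights

variable (q : S → S → ℝ≥0∞)

/-! Paths `c → d` are indexed below by their words of intermediate states: `entryWeight q T c d` is
`Pᶜ(X_{τ⁺_T} = d)`, `hitWeight q a b c` is `Pᶜ(τ⁺_b < τ⁺_a)`, and `hitWeightVisits` restricts the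
latter to paths with `n` intermediate visits to `T`. -/

noncomputable def entryWeight (T : Set S) (c d : S) : ℝ≥0∞ :=
  ∑' u : {u : List S // ∀ z ∈ u, z ∉ T}, pathWeight q (c :: (u.1 ++ [d]))

noncomputable def hitWeight (a b c : S) : ℝ≥0∞ :=
  ∑' w : {w : List S // ∀ z ∈ w, z ≠ a ∧ z ≠ b}, pathWeight q (c :: (w.1 ++ [b]))

noncomputable def hitWeightVisits (T : Set S) [DecidablePred (· ∈ T)] (a b c : S) (n : ℕ) :
    ℝ≥0∞ :=
  ∑' w : {w : List S // (∀ z ∈ w, z ≠ a ∧ z ≠ b) ∧ w.countP (· ∈ T) = n},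
    pathWeight q (c :: (w.1 ++ [b]))

variable {q} in
theorem entryWeight_le_one [Fintype S] (hq : ∀ x, ∑ y, q x y ≤ 1) {T : Set S} (c : S) {d : S}
    (hd : d ∈ T) : entryWeight q T c d ≤ 1 := by
  have hinj : ∀ u u' : {u : List S // ∀ z ∈ u, z ∉ T}, u.1 ++ [d] <+: u'.1 ++ [d] → u = u' := by
    rintro u u' ⟨t, ht⟩
    rw [List.append_assoc, List.singleton_append] at ht
    exact Subtype.ext (append_cons_inj_of_forall_not u.2 u'.2 hd hd ht).1
  classical
  rw [entryWeight, ENNReal.tsum_eq_iSup_sum]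
  refine iSup_le fun F => ?_
  rw [← Finset.sum_image (f := fun γ => pathWeight q (c :: γ)) (g := fun u => u.1 ++ [d])
    (fun u _ u' _ h => hinj u u' ⟨[], (List.append_nil _).trans h⟩)]
  refine sum_pathWeight_cons_le_one q hq c ?_
  intro γ hγ γ' hγ' hne hpre
  obtain ⟨u, -, rfl⟩ := Finset.mem_image.mp hγ
  obtain ⟨u', -, rfl⟩ := Finset.mem_image.mp hγ'
  exact hne (by rw [hinj u u' hpre])

lemma entryWeight_univ (c d : S) : entryWeight q Set.univ c d = q c d := by
  rw [entryWeight, tsum_eq_single ⟨[], by simp⟩]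
  · simp
  · rintro ⟨_ | ⟨z, u⟩, hu⟩ hne
    · exact absurd rfl hne
    · exact absurd (Set.mem_univ z) (hu z List.mem_cons_self)

lemma hitWeight_eq_tsum_hitWeightVisits (T : Set S) [DecidablePred (· ∈ T)] (a b c : S) :
    hitWeight q a b c = ∑' n, hitWeightVisits q T a b c n := by
  let e := (Equiv.sigmaCongrRight fun n : ℕ => (Equiv.subtypeSubtypeEquivSubtypeInter
    (fun w : List S => ∀ z ∈ w, z ≠ a ∧ z ≠ b) (fun w => w.countP (· ∈ T) = n))).symm.trans
    (Equiv.sigmaFiberEquiv fun w : {w : List S // ∀ z ∈ w, z ≠ a ∧ z ≠ b} => w.1.countP (· ∈ T))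
  rw [hitWeight, ← e.tsum_eq, ENNReal.tsum_sigma']
  rfl

variable {T : Set S} [DecidablePred (· ∈ T)] {a b : S}

lemma hitWeightVisits_zero (ha : a ∈ T) (hb : b ∈ T) (c : S) :
    hitWeightVisits q T a b c 0 = entryWeight q T c b := by
  have avoids_T_iff (w : List S) :
      ((∀ z ∈ w, z ≠ a ∧ z ≠ b) ∧ w.countP (· ∈ T) = 0) ↔ ∀ z ∈ w, z ∉ T := by
    simp only [List.countP_eq_zero, decide_eq_true_eq]
    exact ⟨fun h => h.2, fun h => ⟨fun z hz => ⟨fun hza => h z hz (hza ▸ ha),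
      fun hzb => h z hz (hzb ▸ hb)⟩, h⟩⟩
  exact (Equiv.subtypeEquivRight avoids_T_iff).tsum_eq fun u => pathWeight q (c :: (u.1 ++ [b]))

/-- Cutting a word at its first letter in `T`. -/
noncomputable def firstVisitEquiv (ha : a ∈ T) (hb : b ∈ T) (n : ℕ) :
    ({d : S // d ∈ T ∧ d ≠ a ∧ d ≠ b} × {u : List S // ∀ z ∈ u, z ∉ T} ×
      {v : List S // (∀ z ∈ v, z ≠ a ∧ z ≠ b) ∧ v.countP (· ∈ T) = n}) ≃
      {w : List S // (∀ z ∈ w, z ≠ a ∧ z ≠ b) ∧ w.countP (· ∈ T) = n + 1} := by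
  have mem : ∀ (d : {d : S // d ∈ T ∧ d ≠ a ∧ d ≠ b}) (u : {u : List S // ∀ z ∈ u, z ∉ T})
      (v : {v : List S // (∀ z ∈ v, z ≠ a ∧ z ≠ b) ∧ v.countP (· ∈ T) = n}),
      (∀ z ∈ u.1 ++ d.1 :: v.1, z ≠ a ∧ z ≠ b) ∧ (u.1 ++ d.1 :: v.1).countP (· ∈ T) = n + 1 := by
    rintro ⟨d, hdT, hda, hdb⟩ ⟨u, hu⟩ ⟨v, hv, hvn⟩
    have hu0 : u.countP (· ∈ T) = 0 := List.countP_eq_zero.mpr (by simpa using hu)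
    refine ⟨fun z hz => ?_, by simp [List.countP_append, hu0, hvn, hdT]⟩
    simp only [List.mem_append, List.mem_cons] at hz
    rcases hz with hz | rfl | hz
    · exact ⟨fun h => hu z hz (h ▸ ha), fun h => hu z hz (h ▸ hb)⟩
    · exact ⟨hda, hdb⟩
    · exact hv z hz
  refine Equiv.ofBijective (fun x => ⟨_, mem x.1 x.2.1 x.2.2⟩) ⟨?_, ?_⟩
  · rintro ⟨d, u, v⟩ ⟨d', u', v'⟩ h
    obtain ⟨hu, hd, hv⟩ := append_cons_inj_of_forall_not u.2 u'.2 d.2.1 d'.2.1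
      (congrArg Subtype.val h)
    obtain rfl : d = d' := Subtype.ext hd
    obtain rfl : u = u' := Subtype.ext hu
    obtain rfl : v = v' := Subtype.ext hv
    rfl
  · rintro ⟨w, hw, hwn⟩
    obtain ⟨u, d, v, rfl, hu, hdT⟩ := exists_eq_append_cons_of_exists_mem (p := (· ∈ T))
      (by simpa using List.countP_pos_iff.mp (show 0 < w.countP (· ∈ T) by omega))
    have hu0 : u.countP (· ∈ T) = 0 := List.countP_eq_zero.mpr (by simpa using hu)
    refine ⟨⟨⟨d, hdT, hw d (by simp)⟩, ⟨u, hu⟩, ⟨v, fun z hz => hw z (by simp [hz]), ?_⟩⟩, rfl⟩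
    simpa [List.countP_append, hu0, hdT] using hwn

theorem hitWeightVisits_succ (ha : a ∈ T) (hb : b ∈ T) (c : S) (n : ℕ) :
    hitWeightVisits q T a b c (n + 1) =
      ∑' d : {d : S // d ∈ T ∧ d ≠ a ∧ d ≠ b},
        entryWeight q T c d * hitWeightVisits q T a b d n := by
  rw [hitWeightVisits, ← (firstVisitEquiv ha hb n).tsum_eq, ENNReal.tsum_prod']
  refine tsum_congr fun d => ?_
  rw [ENNReal.tsum_prod', entryWeight, ← ENNReal.tsum_mul_right]
  refine tsum_congr fun u => ?_
  rw [hitWeightVisits, ← ENNReal.tsum_mul_left]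
  refine tsum_congr fun v => ?_
  change pathWeight q (c :: ((u.1 ++ d.1 :: v.1) ++ [b])) = _
  rw [List.append_assoc, List.cons_append, pathWeight_cons_append_cons]

theorem hitWeightVisits_eq_induced (ha : a ∈ T) (hb : b ∈ T) (n : ℕ) :
    ∀ c (hc : c ∈ T), hitWeightVisits q T a b c n =
      hitWeightVisits (fun d e : T => entryWeight q T d e) Set.univ ⟨a, ha⟩ ⟨b, hb⟩ ⟨c, hc⟩ n := by
  induction n with
  | zero =>
    intro c hc
    rw [hitWeightVisits_zero q ha hb, hitWeightVisits_zero _ (Set.mem_univ _) (Set.mem_univ _),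
      entryWeight_univ]
  | succ n ih =>
    intro c hc
    rw [hitWeightVisits_succ q ha hb, hitWeightVisits_succ _ (Set.mem_univ _) (Set.mem_univ _)]
    let e : {d : T // d ∈ Set.univ ∧ d ≠ ⟨a, ha⟩ ∧ d ≠ ⟨b, hb⟩} ≃
        {d : S // d ∈ T ∧ d ≠ a ∧ d ≠ b} :=
      (Equiv.subtypeEquivRight fun d => by simp [Subtype.ext_iff]).trans
        (Equiv.subtypeSubtypeEquivSubtypeInter (· ∈ T) fun d => d ≠ a ∧ d ≠ b)
    rw [← e.tsum_eq]
    refine tsum_congr fun d => ?_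
    rw [entryWeight_univ, ih]
    rfl

end Weights

variable (q : S → S → ℝ≥0∞) {T : Set S} {a b : S}

theorem hitWeight_eq_induced (ha : a ∈ T) (hb : b ∈ T) {c : S} (hc : c ∈ T) :
    hitWeight q a b c =
      hitWeight (fun d e : T => entryWeight q T d e) ⟨a, ha⟩ ⟨b, hb⟩ ⟨c, hc⟩ := by
  classical
  rw [hitWeight_eq_tsum_hitWeightVisits q T, hitWeight_eq_tsum_hitWeightVisits _ Set.univ]
  exact tsum_congr fun n => hitWeightVisits_eq_induced q ha hb n c hc

variable {p : S → S → ℝ}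

lemma pathProb_nonneg (hp : ∀ x y, 0 ≤ p x y) : ∀ l : List S, 0 ≤ pathProb p l
  | [] | [_] => zero_le_one
  | a :: b :: l => mul_nonneg (hp a b) (pathProb_nonneg hp (b :: l))

lemma ofReal_pathProb (hp : ∀ x y, 0 ≤ p x y) :
    ∀ l : List S, ENNReal.ofReal (pathProb p l) = pathWeight (fun x y => ENNReal.ofReal (p x y)) l
  | [] | [_] => by simp [pathProb, pathWeight]
  | a :: b :: l => by
    rw [pathProb, pathWeight_cons_cons, ENNReal.ofReal_mul (hp a b), ofReal_pathProb hp (b :: l)]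

lemma tsum_pathProb_eq_toReal {ι : Type*} (hp : ∀ x y, 0 ≤ p x y) (f : ι → List S) :
    ∑' i, pathProb p (f i) =
      (∑' i, pathWeight (fun x y => ENNReal.ofReal (p x y)) (f i)).toReal := by
  simp_rw [← ofReal_pathProb hp, ENNReal.tsum_toReal_eq (fun _ => ENNReal.ofReal_ne_top),
    ENNReal.toReal_ofReal (pathProb_nonneg hp _)]

lemma hitBeforeReturn_eq_toReal_hitWeight (hp : ∀ x y, 0 ≤ p x y) (x y : S) :
    hitBeforeReturn p x y = (hitWeight (fun x y => ENNReal.ofReal (p x y)) x y x).toReal :=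
  (tsum_pathProb_eq_toReal hp (Subtype.val : {γ // FirstHitPath x y γ} → _)).trans
    (congrArg ENNReal.toReal (tsum_isPathWithin _ _ _ _))

lemma inducedTrans_eq_toReal_entryWeight (hp : ∀ x y, 0 ≤ p x y) (T : Set S) (a b : T) :
    inducedTrans p T a b = (entryWeight (fun x y => ENNReal.ofReal (p x y)) T a b).toReal :=
  (tsum_pathProb_eq_toReal hp (Subtype.val : {γ // IsPathWithin (· ∉ T) a b γ} → _)).trans
    (congrArg ENNReal.toReal (tsum_isPathWithin _ _ _ _))

lemma ofReal_inducedTrans [Fintype S] (hp : ∀ x y, 0 ≤ p x y) (hrow : ∀ x, ∑ y, p x y = 1)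
    (T : Set S) (a b : T) :
    ENNReal.ofReal (inducedTrans p T a b) =
      entryWeight (fun x y => ENNReal.ofReal (p x y)) T a b := by
  have hq (x : S) : ∑ y, ENNReal.ofReal (p x y) ≤ 1 := by
    rw [← ENNReal.ofReal_sum_of_nonneg fun y _ => hp x y, hrow x, ENNReal.ofReal_one]
  rw [inducedTrans_eq_toReal_entryWeight hp,
    ENNReal.ofReal_toReal (ne_top_of_le_ne_top ENNReal.one_ne_top (entryWeight_le_one hq a b.2))]

end InducedChain

theorem induced_chain_preserves_hitting_general
    {S : Type*} [Fintype S] [DecidableEq S]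
    (p : S → S → ℝ) (hp : ∀ x y, 0 ≤ p x y) (hrow : ∀ x, ∑ y, p x y = 1)
    (T : Set S) :
    ∀ a b : T, hitBefore p a.1 b.1 = hitBefore (inducedTrans p T) a b := by
  intro a b
  by_cases hab : a = b
  · simp [hitBefore, hab]
  have hp_induced (c d : T) : 0 ≤ inducedTrans p T c d :=
    InducedChain.inducedTrans_eq_toReal_entryWeight hp T c d ▸ ENNReal.toReal_nonneg
  rw [hitBefore, hitBefore, if_neg (Subtype.coe_ne_coe.mpr hab), if_neg hab,
    InducedChain.hitBeforeReturn_eq_toReal_hitWeight hp,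
    InducedChain.hitBeforeReturn_eq_toReal_hitWeight hp_induced]
  simp_rw [InducedChain.ofReal_inducedTrans hp hrow]
  exact congrArg ENNReal.toReal (InducedChain.hitWeight_eq_induced _ a.2 b.2 a.2)

theorem induced_chain_preserves_hitting
    {S : Type*} [Fintype S] [DecidableEq S]
    (p : S → S → ℝ) (hp : ∀ x y, 0 ≤ p x y) (hrow : ∀ x, ∑ y, p x y = 1)
    (T : Set S) [DecidablePred (· ∈ T)]
    (hwd : ∀ a : T, ∑ b : T, inducedTrans p T a b = 1) :
    ∀ a b : T, hitBefore p a.1 b.1 = hitBefore (inducedTrans p T) a b :=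
  induced_chain_preserves_hitting_general p hp hrow T
end

section
/- Consider a two-state perturbation on {x, y} with p_ε(x,y) = ε² and p_ε(y,x) = ε^{2+cos(1/ε)} for ε ∈ (0,1] (self-loops completing the rows). Then the unique stationary distribution satisfies μ_ε(x) = 1/(1 + ε^{−cos(1/ε)}), and both liminf_{ε→0} μ_ε(x) = 0 and liminf_{ε→0} μ_ε(y) = 0; hence neither state is stochastically stable. -/
open Filter

/-- The two-state perturbation: state `0` is `x`, state `1` is `y`;
`p_ε(x,y) = ε²` and `p_ε(y,x) = ε^{2+cos(1/ε)}`. -/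
noncomputable def twoStateP (ε : ℝ) : Fin 2 → Fin 2 → ℝ :=
  ![![1 - ε ^ 2, ε ^ 2],
    ![ε ^ ((2 : ℝ) + Real.cos ε⁻¹), 1 - ε ^ ((2 : ℝ) + Real.cos ε⁻¹)]]

/-- The claimed stationary weights: `μ_ε(x) = 1/(1 + ε^{−cos(1/ε)})`. -/
noncomputable def twoStateMu (ε : ℝ) : Fin 2 → ℝ :=
  ![1 / (1 + ε ^ (-Real.cos ε⁻¹)), 1 - 1 / (1 + ε ^ (-Real.cos ε⁻¹))]

/-!
A two-state chain with transition probabilities `a` (from `x` to `y`) and `b` (back) is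
stationary exactly under the balance equation `μ(x) a = μ(y) b`, so
`μ_ε(x) / μ_ε(y) = ε^{cos(1/ε)}`. Since `cos(1/ε)` takes the values `1` and `-1` for
arbitrarily small `ε`, along `ε = 1/(2πn)` we get `μ_ε(x) = ε/(1+ε)`, and along
`ε = 1/((2n+1)π)` we get `μ_ε(y) = ε/(1+ε)`; both tend to `0`.
-/

open Real Topology

def IsStationaryDistribution {ι : Type*} [Fintype ι] (P : ι → ι → ℝ) (ν : ι → ℝ) : Prop :=
  (∀ i, 0 ≤ ν i) ∧ ∑ i, ν i = 1 ∧ ∀ j, ∑ i, ν i * P i j = ν j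

def twoStateMatrix (a b : ℝ) : Fin 2 → Fin 2 → ℝ :=
  ![![1 - a, a], ![b, 1 - b]]

lemma twoStateMatrix_stationary_iff (a b : ℝ) (ν : Fin 2 → ℝ) :
    (∀ j, ∑ i, ν i * twoStateMatrix a b i j = ν j) ↔ ν 0 * a = ν 1 * b := by
  simp only [Fin.forall_fin_two, Fin.sum_univ_two, twoStateMatrix, Matrix.cons_val_zero,
    Matrix.cons_val_one]
  constructor
  · rintro ⟨h, -⟩
    linarith
  · intro h
    constructor <;> linarith

lemma isStationaryDistribution_twoStateMatrix_iff {a b : ℝ} (ha : 0 ≤ a) (hb : 0 ≤ b)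
    (hab : 0 < a + b) (ν : Fin 2 → ℝ) :
    IsStationaryDistribution (twoStateMatrix a b) ν ↔ ν = ![b / (a + b), a / (a + b)] := by
  rw [IsStationaryDistribution, twoStateMatrix_stationary_iff, Fin.forall_fin_two,
    Fin.sum_univ_two, funext_iff, Fin.forall_fin_two]
  simp only [Matrix.cons_val_zero, Matrix.cons_val_one]
  constructor
  · rintro ⟨-, hsum, hbal⟩
    constructor <;> rw [eq_div_iff hab.ne']
    · linear_combination hbal + b * hsum
    · linear_combination -hbal + a * hsum
  · rintro ⟨h0, h1⟩
    rw [h0, h1]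
    exact ⟨⟨by positivity, by positivity⟩, by field_simp; ring, by field_simp⟩

lemma twoStateP_eq (ε : ℝ) :
    twoStateP ε = twoStateMatrix (ε ^ 2) (ε ^ ((2 : ℝ) + cos ε⁻¹)) :=
  rfl

lemma twoStateMu_eq {ε : ℝ} (hε : 0 < ε) :
    twoStateMu ε = ![ε ^ ((2 : ℝ) + cos ε⁻¹) / (ε ^ 2 + ε ^ ((2 : ℝ) + cos ε⁻¹)),
      ε ^ 2 / (ε ^ 2 + ε ^ ((2 : ℝ) + cos ε⁻¹))] := by
  have hb : 0 < ε ^ ((2 : ℝ) + cos ε⁻¹) := rpow_pos_of_pos hε _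
  have hratio : ε ^ (-cos ε⁻¹) = ε ^ 2 / ε ^ ((2 : ℝ) + cos ε⁻¹) := by
    rw [← rpow_two, ← rpow_sub hε]
    ring_nf
  have hx : 1 / (1 + ε ^ (-cos ε⁻¹)) =
      ε ^ ((2 : ℝ) + cos ε⁻¹) / (ε ^ 2 + ε ^ ((2 : ℝ) + cos ε⁻¹)) := by
    rw [hratio]
    field_simp
    ring
  rw [twoStateMu, hx]
  congr 2
  field_simp
  ring

lemma isStationaryDistribution_twoStateP_iff {ε : ℝ} (hε : 0 < ε) (ν : Fin 2 → ℝ) :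
    IsStationaryDistribution (twoStateP ε) ν ↔ ν = twoStateMu ε := by
  rw [twoStateP_eq, twoStateMu_eq hε]
  exact isStationaryDistribution_twoStateMatrix_iff (by positivity)
    (rpow_pos_of_pos hε _).le (by positivity) ν

lemma frequently_cos_inv_eq (θ : ℝ) : ∃ᶠ ε in 𝓝[>] (0 : ℝ), cos ε⁻¹ = cos θ := by
  have hu : Tendsto (fun n : ℕ => (θ + n * (2 * π))⁻¹) atTop (𝓝[>] 0) :=
    tendsto_inv_atTop_nhdsGT_zero.comp <| tendsto_atTop_add_const_left _ θ <|
      tendsto_natCast_atTop_atTop.atTop_mul_const (by positivity)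
  exact hu.frequently <| Frequently.of_forall fun n => by
    rw [inv_inv, cos_add_nat_mul_two_pi]

lemma twoStateMu_zero_le_self {ε : ℝ} (hε : 0 < ε) (hcos : cos ε⁻¹ = 1) :
    twoStateMu ε 0 ≤ ε := by
  simp only [twoStateMu, Matrix.cons_val_zero, hcos, rpow_neg_one]
  rw [div_le_iff₀ (by positivity), mul_add, mul_inv_cancel₀ hε.ne']
  linarith

lemma twoStateMu_one_le_self {ε : ℝ} (hε : 0 < ε) (hcos : cos ε⁻¹ = -1) :
    twoStateMu ε 1 ≤ ε := by
  simp only [twoStateMu, Matrix.cons_val_one, Matrix.cons_val_zero, hcos, neg_neg, rpow_one]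
  have : 1 - ε ≤ 1 / (1 + ε) := by
    rw [le_div_iff₀ (by positivity)]
    nlinarith
  linarith

lemma liminf_eq_zero_of_frequently_le {α : Type*} {l : Filter α} {f g : α → ℝ}
    (hf : ∀ᶠ x in l, 0 ≤ f x) (hg : Tendsto g l (𝓝 0)) (hfg : ∃ᶠ x in l, f x ≤ g x) :
    liminf f l = 0 := by
  have hsmall : ∀ δ > 0, ∃ᶠ x in l, f x ≤ δ := fun δ hδ =>
    (hfg.and_eventually (hg.eventually (gt_mem_nhds hδ))).mono fun _ h => h.1.trans h.2.le
  refine le_antisymm (le_of_forall_pos_le_add fun δ hδ => ?_) ?_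
  · simpa using liminf_le_of_frequently_le (hsmall δ hδ) (isBoundedUnder_of_eventually_ge hf)
  · exact le_liminf_of_le (IsCoboundedUnder.of_frequently_le (hsmall 1 one_pos)) hf

theorem twoState_no_stable_state :
    (∀ ε ∈ Set.Ioc (0 : ℝ) 1,
      (∀ i, 0 ≤ twoStateMu ε i) ∧ (∑ i, twoStateMu ε i) = 1 ∧
      (∀ j, ∑ i, twoStateMu ε i * twoStateP ε i j = twoStateMu ε j) ∧
      (∀ ν : Fin 2 → ℝ, (∀ i, 0 ≤ ν i) → (∑ i, ν i) = 1 →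
        (∀ j, ∑ i, ν i * twoStateP ε i j = ν j) → ν = twoStateMu ε)) ∧
    Filter.liminf (fun ε => twoStateMu ε 0) (nhdsWithin 0 (Set.Ioc 0 1)) = 0 ∧
    Filter.liminf (fun ε => twoStateMu ε 1) (nhdsWithin 0 (Set.Ioc 0 1)) = 0 := by
  have hstat {ε : ℝ} (hε : ε ∈ Set.Ioc 0 1) :
      IsStationaryDistribution (twoStateP ε) (twoStateMu ε) :=
    (isStationaryDistribution_twoStateP_iff hε.1 _).2 rfl
  have hnonneg (i : Fin 2) : ∀ᶠ ε in 𝓝[>] (0 : ℝ), 0 ≤ twoStateMu ε i :=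
    eventually_of_mem (Ioc_mem_nhdsGT one_pos) fun _ hε => (hstat hε).1 i
  have hid : Tendsto id (𝓝[>] (0 : ℝ)) (𝓝 0) := tendsto_id.mono_left nhdsWithin_le_nhds
  rw [nhdsWithin_Ioc_eq_nhdsGT one_pos]
  refine ⟨fun ε hε => ⟨(hstat hε).1, (hstat hε).2.1, (hstat hε).2.2, fun ν h0 h1 h2 =>
    (isStationaryDistribution_twoStateP_iff hε.1 ν).1 ⟨h0, h1, h2⟩⟩, ?_, ?_⟩
  · refine liminf_eq_zero_of_frequently_le (hnonneg 0) hid ?_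
    refine ((frequently_cos_inv_eq 0).and_eventually self_mem_nhdsWithin).mono ?_
    exact fun ε ⟨hcos, hε⟩ => twoStateMu_zero_le_self hε (hcos.trans cos_zero)
  · refine liminf_eq_zero_of_frequently_le (hnonneg 1) hid ?_
    refine ((frequently_cos_inv_eq π).and_eventually self_mem_nhdsWithin).mono ?_
    exact fun ε ⟨hcos, hε⟩ => twoStateMu_one_le_self hε (hcos.trans cos_pi)
end

section
/- Let p be a perturbation on finite state space S satisfying: for all x ≠ y, every nonzero transition map p(x,y) is strictly positive, and the multiplicative closure of the off-diagonal transition maps is totally preordered by ≼. Assume each p_ε is irreducible, and for x ∈ S let β^x_ε := max over spanning trees T of the complete directed graph on S rooted toward x of Π_{(z,t)∈T} p_ε(z,t). Then x is stochastically stable if and only if β^y ≼ β^x for all y ∈ S. -/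
open Filter

/-- `f` encodes a spanning tree of the complete directed graph on `S`
directed towards the root `x` : every non-root vertex has a unique outgoing
arc `(z, f z)` and iterating `f` reaches `x`. -/
def SpanningTreeTo {S : Type*} (x : S) (f : S → S) : Prop :=
  f x = x ∧ ∀ y, ∃ n, f^[n] y = x

/-- The weight of a spanning tree: product of the probabilities of its arcs. -/
noncomputable def treeWeight {S : Type*} [Fintype S] [DecidableEq S]
    (p : S → S → ℝ) (x : S) (f : S → S) : ℝ :=
  ∏ z ∈ Finset.univ.erase x, p z (f z)

/-- `β^x_ε` : the maximal weight of a spanning tree rooted at `x`. -/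
noncomputable def beta {S : Type*} [Fintype S] [DecidableEq S]
    (p : ℝ → S → S → ℝ) (x : S) (ε : ℝ) : ℝ :=
  ⨆ f : {f : S → S // SpanningTreeTo x f}, treeWeight (p ε) x f.1

/-- Stochastic stability of a state for a perturbation. -/
def StochasticallyStable {S : Type*} [Fintype S] (I : Set ℝ)
    (p : ℝ → S → S → ℝ) (x : S) : Prop :=
  ∃ μ : ℝ → S → ℝ,
    (∀ ε ∈ I, (∀ z, 0 ≤ μ ε z) ∧ (∑ z, μ ε z) = 1 ∧
      (∀ y, ∑ z, μ ε z * p ε z y = μ ε y)) ∧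
    0 < Filter.liminf (fun ε => μ ε x) (nhdsWithin 0 I)

section Aux
variable {S : Type*} [Fintype S] [DecidableEq S]

/-- update preserves reachability -/
lemma reach_update {g : S → S} {z c : S} :
    ∀ (m : ℕ) (y : S), g^[m] y = z → ∃ k, (Function.update g z c)^[k] y = z := by
  intro m
  induction m with
  | zero => intro y h; exact ⟨0, h⟩
  | succ n ih =>
    intro y h
    by_cases hy : y = z
    · exact ⟨0, hy⟩
    · rw [Function.iterate_succ_apply] at h
      obtain ⟨k, hk⟩ := ih (g y) h
      exact ⟨k + 1, by rw [Function.iterate_add_apply, Function.iterate_one,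
        Function.update_of_ne hy, hk]⟩

lemma iterate_mod {g : S → S} {a : S} {q : ℕ} (hq : g^[q] a = a) (m : ℕ) :
    g^[m] a = g^[m % q] a := by
  conv_lhs => rw [← Nat.mod_add_div m q]
  rw [Function.iterate_add_apply]
  congr 1
  induction (m / q) with
  | zero => simp
  | succ k ih => rw [Nat.mul_succ, Function.iterate_add_apply, hq, ih]

lemma const_tree (x : S) : SpanningTreeTo x (fun _ => x) :=
  ⟨rfl, fun y => ⟨1, rfl⟩⟩

set_option linter.unusedSectionVars false

noncomputable instance fintypeTrees (x : S) : Fintype {f : S → S // SpanningTreeTo x f} := by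
  classical exact Subtype.fintype _

instance nonemptyTrees (x : S) : Nonempty {f : S → S // SpanningTreeTo x f} :=
  ⟨⟨_, const_tree x⟩⟩

lemma treeWeight_nonneg {p : S → S → ℝ} (hp : ∀ a b, 0 ≤ p a b) (x : S) (f : S → S) :
    0 ≤ treeWeight p x f :=
  Finset.prod_nonneg fun _ _ => hp _ _

lemma le_beta {p : ℝ → S → S → ℝ} {x : S} {ε : ℝ} {f : S → S} (hf : SpanningTreeTo x f) :
    treeWeight (p ε) x f ≤ beta p x ε := by
  have : BddAbove (Set.range fun f : {f : S → S // SpanningTreeTo x f} =>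
      treeWeight (p ε) x f.1) := (Set.finite_range _).bddAbove
  exact le_ciSup this ⟨f, hf⟩

lemma beta_exists (p : ℝ → S → S → ℝ) (x : S) (ε : ℝ) :
    ∃ f : S → S, SpanningTreeTo x f ∧ beta p x ε = treeWeight (p ε) x f := by
  obtain ⟨f₀, hf₀⟩ := Finite.exists_max
    (fun f : {f : S → S // SpanningTreeTo x f} => treeWeight (p ε) x f.1)
  refine ⟨f₀.1, f₀.2, le_antisymm (ciSup_le fun f => hf₀ f) (le_beta f₀.2)⟩

lemma beta_nonneg {p : ℝ → S → S → ℝ} (hp : ∀ a b, 0 ≤ p ε a b) (x : S) :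
    0 ≤ beta p x ε :=
  le_trans (treeWeight_nonneg hp x _) (le_beta (const_tree x))

open Classical in
noncomputable def sigmaW (p : S → S → ℝ) (x : S) : ℝ :=
  ∑ f : S → S, if SpanningTreeTo x f then treeWeight p x f else 0

lemma sigmaW_nonneg {p : S → S → ℝ} (hp : ∀ a b, 0 ≤ p a b) (x : S) :
    0 ≤ sigmaW p x := by
  classical
  refine Finset.sum_nonneg fun f _ => ?_
  split
  · exact treeWeight_nonneg hp x f
  · exact le_refl _

lemma beta_le_sigmaW {p : ℝ → S → S → ℝ} {ε : ℝ} (hp : ∀ a b, 0 ≤ p ε a b) (x : S) :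
    beta p x ε ≤ sigmaW (p ε) x := by
  classical
  obtain ⟨f, hf, hb⟩ := beta_exists p x ε
  rw [hb, sigmaW]
  have := Finset.single_le_sum (f := fun g : S → S =>
      if SpanningTreeTo x g then treeWeight (p ε) x g else 0)
    (fun g _ => by
      split
      · exact treeWeight_nonneg hp x g
      · exact le_refl _)
    (Finset.mem_univ f)
  simpa [if_pos hf] using this

lemma sigmaW_le_beta {p : ℝ → S → S → ℝ} {ε : ℝ} (hp : ∀ a b, 0 ≤ p ε a b) (x : S) :
    sigmaW (p ε) x ≤ (Fintype.card (S → S) : ℝ) * beta p x ε := by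
  classical
  have hb := beta_nonneg (p := p) (x := x) hp
  calc sigmaW (p ε) x ≤ ∑ _f : S → S, beta p x ε := by
        refine Finset.sum_le_sum fun f _ => ?_
        split
        · exact le_beta ‹_›
        · exact hb
    _ = (Fintype.card (S → S) : ℝ) * beta p x ε := by
        rw [Finset.sum_const, Finset.card_univ, nsmul_eq_mul]

def stepsTo {S : Type*} (r : S → S → Prop) (x : S) : ℕ → S → Prop
  | 0 => fun y => y = x
  | (n+1) => fun y => ∃ c, r y c ∧ stepsTo r x n c

lemma rtg_steps {r : S → S → Prop} {x y : S}
    (h : Relation.ReflTransGen r y x) : ∃ n, stepsTo r x n y := by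
  induction h using Relation.ReflTransGen.head_induction_on with
  | refl => exact ⟨0, rfl⟩
  | head h' _ ih => obtain ⟨n, hn⟩ := ih; exact ⟨n + 1, _, h', hn⟩

lemma exists_pos_tree {p : S → S → ℝ} (x : S)
    (hirr : ∀ y, Relation.ReflTransGen (fun a b => 0 < p a b) y x) :
    ∃ f, SpanningTreeTo x f ∧ 0 < treeWeight p x f := by
  classical
  set r : S → S → Prop := fun a b => 0 < p a b with hr
  have hex : ∀ y, ∃ n, stepsTo r x n y := fun y => rtg_steps (hirr y)
  set d : S → ℕ := fun y => Nat.find (hex y) with hd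
  have hstep : ∀ y, y ≠ x → ∃ c, r y c ∧ d c < d y := by
    intro y hy
    have h1 : stepsTo r x (d y) y := Nat.find_spec (hex y)
    rcases hn : d y with _ | m
    · rw [hn] at h1; exact absurd h1 hy
    · rw [hn] at h1
      obtain ⟨c, hrc, hc⟩ := h1
      refine ⟨c, hrc, ?_⟩
      have : d c ≤ m := Nat.find_le hc
      omega
  set f : S → S := fun y => if hy : y = x then x else Classical.choose (hstep y hy)
    with hf
  have hfx : f x = x := by simp [hf]
  have hfr : ∀ y, y ≠ x → r y (f y) ∧ d (f y) < d y := by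
    intro y hy
    have := Classical.choose_spec (hstep y hy)
    simpa [hf, dif_neg hy] using this
  have hreach : ∀ (n : ℕ) (y : S), d y ≤ n → ∃ k, f^[k] y = x := by
    intro n
    induction n with
    | zero =>
      intro y hy
      by_cases h : y = x
      · exact ⟨0, h⟩
      · exact absurd (lt_of_lt_of_le (hfr y h).2 hy) (Nat.not_lt_zero _)
    | succ n ih =>
      intro y hy
      by_cases h : y = x
      · exact ⟨0, h⟩
      · obtain ⟨k, hk⟩ := ih (f y) (by have := (hfr y h).2; omega)
        exact ⟨k + 1, by rw [Function.iterate_add_apply, Function.iterate_one, hk]⟩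
  refine ⟨f, ⟨hfx, fun y => hreach (d y) y le_rfl⟩, ?_⟩
  refine Finset.prod_pos fun z hz => ?_
  exact (hfr z (Finset.ne_of_mem_erase hz)).1

open Classical in
/-- the vertex before `x` on the cycle of `x` in the functional graph of `g`. -/
noncomputable def cyc (g : S → S) (x : S) : S :=
  if h : ∃ n, g^[n+1] x = x then g^[Nat.find h] x else x

lemma cyc_ret {g : S → S} {x : S} (h : ∃ n, g^[n+1] x = x) :
    g (cyc g x) = x := by
  have hs := Nat.find_spec h
  rw [Function.iterate_succ_apply'] at hs
  rw [cyc, dif_pos h]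
  exact hs

lemma cyc_eq {g : S → S} {x z : S} (hz : g z = x) (hm : ∃ m, g^[m] x = z) :
    cyc g x = z := by
  have h : ∃ n, g^[n+1] x = x :=
    ⟨Nat.find hm, by rw [Function.iterate_succ_apply', Nat.find_spec hm, hz]⟩
  rw [cyc, dif_pos h]
  have hq : g^[Nat.find h + 1] x = x := Nat.find_spec h
  have hle : Nat.find h ≤ Nat.find hm :=
    Nat.find_le (by rw [Function.iterate_succ_apply', Nat.find_spec hm, hz])
  rcases eq_or_lt_of_le hle with heq | hlt
  · rw [heq]; exact Nat.find_spec hm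
  · exfalso
    have hmod : g^[Nat.find hm] x = g^[Nat.find hm % (Nat.find h + 1)] x :=
      iterate_mod hq (Nat.find hm)
    have : g^[Nat.find hm % (Nat.find h + 1)] x = z := by
      rw [← hmod]; exact Nat.find_spec hm
    have hlt2 : Nat.find hm % (Nat.find h + 1) < Nat.find hm :=
      lt_of_lt_of_le (Nat.mod_lt _ (Nat.succ_pos _)) hlt
    exact absurd (Nat.find_le this) (not_le_of_gt hlt2)

lemma cyc_reach {g : S → S} {x : S} (hg : ∀ y, ∃ n, g^[n] y = x) (y : S) :
    ∃ m, g^[m] y = cyc g x := by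
  have h : ∃ n, g^[n+1] x = x := by
    obtain ⟨m, hm⟩ := hg (g x)
    exact ⟨m, by rw [Function.iterate_succ_apply]; exact hm⟩
  obtain ⟨k, hk⟩ := hg y
  refine ⟨Nat.find h + k, ?_⟩
  rw [Function.iterate_add_apply, hk, cyc, dif_pos h]

open Classical in
/-- Lemma 1: sum over "all-reach" functions equals `∑ z, σ_z p(z,x)`. -/
lemma allreach_eq_sum_sigma (p : S → S → ℝ) (x : S) :
    ∑ g ∈ Finset.univ.filter (fun g : S → S => ∀ y, ∃ n, g^[n] y = x),
        ∏ w, p w (g w)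
    = ∑ z, sigmaW p z * p z x := by
  classical
  have hrhs : ∑ z, sigmaW p z * p z x
      = ∑ zf ∈ Finset.univ.filter (fun zf : S × (S → S) => SpanningTreeTo zf.1 zf.2),
          treeWeight p zf.1 zf.2 * p zf.1 x := by
    rw [Finset.sum_filter, Fintype.sum_prod_type]
    refine Finset.sum_congr rfl fun z _ => ?_
    rw [sigmaW, Finset.sum_mul]
    refine Finset.sum_congr rfl fun f _ => ?_
    dsimp only
    rw [ite_mul, zero_mul]
  rw [hrhs]
  refine Finset.sum_nbij'
    (fun g => (cyc g x, Function.update g (cyc g x) (cyc g x)))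
    (fun zf => Function.update zf.2 zf.1 x) ?_ ?_ ?_ ?_ ?_
  · intro g hg
    rw [Finset.mem_filter] at hg ⊢
    refine ⟨Finset.mem_univ _, Function.update_self _ _ _, fun y => ?_⟩
    obtain ⟨m, hm⟩ := cyc_reach hg.2 y
    exact reach_update m y hm
  · intro zf hzf
    rw [Finset.mem_filter] at hzf ⊢
    obtain ⟨-, hfix, hre⟩ := hzf
    refine ⟨Finset.mem_univ _, fun y => ?_⟩
    obtain ⟨m, hm⟩ := hre y
    obtain ⟨k, hk⟩ := reach_update (c := x) m y hm
    refine ⟨k + 1, ?_⟩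
    rw [Function.iterate_succ_apply', hk, Function.update_self]
  · intro g hg
    rw [Finset.mem_filter] at hg
    have h : ∃ n, g^[n+1] x = x := by
      obtain ⟨m, hm⟩ := hg.2 (g x)
      exact ⟨m, by rw [Function.iterate_succ_apply]; exact hm⟩
    dsimp only
    rw [Function.update_idem, Function.update_eq_self_iff]
    exact (cyc_ret h).symm
  · intro zf hzf
    rw [Finset.mem_filter] at hzf
    obtain ⟨-, hfix, hre⟩ := hzf
    have hz : Function.update zf.2 zf.1 x zf.1 = x := Function.update_self _ _ _
    have hm : ∃ m, (Function.update zf.2 zf.1 x)^[m] x = zf.1 := by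
      obtain ⟨m, hm⟩ := hre x
      exact reach_update m x hm
    have hcyc : cyc (Function.update zf.2 zf.1 x) x = zf.1 := cyc_eq hz hm
    refine Prod.ext hcyc ?_
    simp only [hcyc, Function.update_idem]
    rw [Function.update_eq_self_iff]
    exact hfix.symm
  · intro g hg
    rw [Finset.mem_filter] at hg
    have h : ∃ n, g^[n+1] x = x := by
      obtain ⟨m, hm⟩ := hg.2 (g x)
      exact ⟨m, by rw [Function.iterate_succ_apply]; exact hm⟩
    have hret : g (cyc g x) = x := cyc_ret h
    rw [treeWeight]
    have h1 : ∏ z ∈ Finset.univ.erase (cyc g x),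
        p z (Function.update g (cyc g x) (cyc g x) z)
        = ∏ z ∈ Finset.univ.erase (cyc g x), p z (g z) :=
      Finset.prod_congr rfl fun z hz =>
        by rw [Function.update_of_ne (Finset.ne_of_mem_erase hz)]
    rw [h1, ← Finset.mul_prod_erase Finset.univ (fun z => p z (g z))
      (Finset.mem_univ (cyc g x)), hret, mul_comm]

open Classical in
/-- Lemma 2: sum over "all-reach" functions equals `σ_x` (rows summing to 1). -/
lemma allreach_eq_sigma (p : S → S → ℝ) (x : S) (hrow : ∀ a, ∑ b, p a b = 1) :
    ∑ g ∈ Finset.univ.filter (fun g : S → S => ∀ y, ∃ n, g^[n] y = x),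
        ∏ w, p w (g w)
    = sigmaW p x := by
  classical
  have hrhs : sigmaW p x
      = ∑ fy ∈ (Finset.univ.filter (fun f : S → S => SpanningTreeTo x f)) ×ˢ
          Finset.univ,
          treeWeight p x fy.1 * p x fy.2 := by
    rw [Finset.sum_product, Finset.sum_filter, sigmaW]
    refine Finset.sum_congr rfl fun f _ => ?_
    dsimp only
    split
    · rw [← Finset.mul_sum, hrow x, mul_one]
    · rfl
  rw [hrhs]
  refine Finset.sum_nbij'
    (fun g => (Function.update g x x, g x))
    (fun fy => Function.update fy.1 x fy.2) ?_ ?_ ?_ ?_ ?_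
  · intro g hg
    rw [Finset.mem_filter] at hg
    rw [Finset.mem_product, Finset.mem_filter]
    refine ⟨⟨Finset.mem_univ _, Function.update_self _ _ _, fun y => ?_⟩,
      Finset.mem_univ _⟩
    obtain ⟨m, hm⟩ := hg.2 y
    exact reach_update m y hm
  · intro fy hfy
    rw [Finset.mem_product, Finset.mem_filter] at hfy
    rw [Finset.mem_filter]
    refine ⟨Finset.mem_univ _, fun y => ?_⟩
    obtain ⟨m, hm⟩ := hfy.1.2.2 y
    exact reach_update m y hm
  · intro g _
    dsimp only
    rw [Function.update_idem, Function.update_eq_self]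
  · intro fy hfy
    rw [Finset.mem_product, Finset.mem_filter] at hfy
    refine Prod.ext ?_ (Function.update_self _ _ _)
    simp only [Function.update_idem]
    rw [Function.update_eq_self_iff]
    exact hfy.1.2.1.symm
  · intro g _
    rw [treeWeight]
    have h1 : ∏ z ∈ Finset.univ.erase x,
        p z (Function.update g x x z)
        = ∏ z ∈ Finset.univ.erase x, p z (g z) :=
      Finset.prod_congr rfl fun z hz =>
        by rw [Function.update_of_ne (Finset.ne_of_mem_erase hz)]
    rw [h1, ← Finset.mul_prod_erase Finset.univ (fun z => p z (g z))
      (Finset.mem_univ x), mul_comm]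

/-- Markov chain tree theorem (stationarity of σ). -/
lemma sigma_stationary (p : S → S → ℝ) (hrow : ∀ a, ∑ b, p a b = 1) (x : S) :
    ∑ z, sigmaW p z * p z x = sigmaW p x := by
  rw [← allreach_eq_sum_sigma, allreach_eq_sigma p x hrow]

lemma stationary_pos {p : S → S → ℝ} (hp : ∀ a b, 0 ≤ p a b)
    (hirr : ∀ a b, Relation.ReflTransGen (fun a b => 0 < p a b) a b)
    {ν : S → ℝ} (hν0 : ∀ z, 0 ≤ ν z) (hν1 : ∑ z, ν z = 1)
    (hνs : ∀ y, ∑ z, ν z * p z y = ν y) (y : S) : 0 < ν y := by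
  have hw : ∃ w, 0 < ν w := by
    by_contra hc
    push_neg at hc
    have : ∀ z, ν z = 0 := fun z => le_antisymm (hc z) (hν0 z)
    simp [this] at hν1
  obtain ⟨w, hw⟩ := hw
  have h := hirr w y
  induction h with
  | refl => exact hw
  | tail hab hbc ih =>
    rename_i b c
    have h1 : ν b * p b c ≤ ν c := by
      rw [← hνs c]
      exact Finset.single_le_sum
        (fun z _ => mul_nonneg (hν0 z) (hp z c)) (Finset.mem_univ b)
    exact lt_of_lt_of_le (mul_pos ih hbc) h1

lemma stationary_unique {p : S → S → ℝ} (hp : ∀ a b, 0 ≤ p a b)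
    (hirr : ∀ a b, Relation.ReflTransGen (fun a b => 0 < p a b) a b)
    {μ ν : S → ℝ} (hμ0 : ∀ z, 0 ≤ μ z) (hμ1 : ∑ z, μ z = 1)
    (hμs : ∀ y, ∑ z, μ z * p z y = μ y)
    (hν0 : ∀ z, 0 ≤ ν z) (hν1 : ∑ z, ν z = 1)
    (hνs : ∀ y, ∑ z, ν z * p z y = ν y) : μ = ν := by
  have hνpos : ∀ z, 0 < ν z := stationary_pos hp hirr hν0 hν1 hνs
  have hSne : (Finset.univ : Finset S).Nonempty := by
    by_contra hc
    rw [Finset.not_nonempty_iff_eq_empty] at hc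
    rw [hc, Finset.sum_empty] at hν1
    norm_num at hν1
  obtain ⟨z₀, -, hz₀⟩ := Finset.exists_min_image Finset.univ (fun z => μ z / ν z) hSne
  set c : ℝ := μ z₀ / ν z₀ with hc
  set h : S → ℝ := fun z => μ z - c * ν z with hh
  have hh0 : ∀ z, 0 ≤ h z := by
    intro z
    have : c ≤ μ z / ν z := hz₀ z (Finset.mem_univ z)
    rw [le_div_iff₀ (hνpos z)] at this
    simp only [hh, sub_nonneg]
    linarith [this]
  have hhz₀ : h z₀ = 0 := by
    simp only [hh, hc]
    rw [div_mul_cancel₀ _ (ne_of_gt (hνpos z₀))]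
    ring
  have hhs : ∀ y, ∑ z, h z * p z y = h y := by
    intro y
    simp only [hh, sub_mul, Finset.sum_sub_distrib, mul_assoc, ← Finset.mul_sum,
      hμs y, hνs y]
  have hzero : ∀ a, h a = 0 := by
    intro a
    have hr := hirr a z₀
    induction hr using Relation.ReflTransGen.head_induction_on with
    | refl => exact hhz₀
    | head h' htail ih =>
      rename_i a' c'
      have h2 : ∑ z, h z * p z c' = 0 := by rw [hhs c', ih]
      have h3 := (Finset.sum_eq_zero_iff_of_nonneg
        (fun z _ => mul_nonneg (hh0 z) (hp z c'))).mp h2 a' (Finset.mem_univ a')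
      rcases mul_eq_zero.mp h3 with h4 | h4
      · exact h4
      · exact absurd h4 (ne_of_gt h')
  have hc1 : c = 1 := by
    have hsum : ∑ z, h z = 0 := Finset.sum_eq_zero fun z _ => hzero z
    simp only [hh, Finset.sum_sub_distrib, ← Finset.mul_sum, hμ1, hν1] at hsum
    linarith
  funext z
  have := hzero z
  simp only [hh, hc1, one_mul, sub_eq_zero] at this
  exact this

noncomputable def nu (p : S → S → ℝ) (y : S) : ℝ := sigmaW p y / ∑ z, sigmaW p z

variable {p : S → S → ℝ}

lemma beta_all_pos {q : ℝ → S → S → ℝ} {ε : ℝ}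
    (hirr : ∀ a b, Relation.ReflTransGen (fun a b => 0 < q ε a b) a b) (y : S) :
    0 < beta q y ε := by
  obtain ⟨f, hf, hw⟩ := exists_pos_tree y (fun w => hirr w y)
  exact lt_of_lt_of_le hw (le_beta hf)

lemma sigmaW_all_pos {q : ℝ → S → S → ℝ} {ε : ℝ} (hq0 : ∀ a b, 0 ≤ q ε a b)
    (hirr : ∀ a b, Relation.ReflTransGen (fun a b => 0 < q ε a b) a b) (y : S) :
    0 < sigmaW (q ε) y :=
  lt_of_lt_of_le (beta_all_pos hirr y) (beta_le_sigmaW hq0 y)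

lemma Zpos [Nonempty S] (hp0 : ∀ a b, 0 ≤ p a b)
    (hirr : ∀ a b, Relation.ReflTransGen (fun a b => 0 < p a b) a b) :
    0 < ∑ z, sigmaW p z := by
  refine Finset.sum_pos (fun z _ => ?_) Finset.univ_nonempty
  exact sigmaW_all_pos (q := fun _ => p) (ε := 0) hp0 hirr z

lemma nu_nonneg [Nonempty S] (hp0 : ∀ a b, 0 ≤ p a b)
    (hirr : ∀ a b, Relation.ReflTransGen (fun a b => 0 < p a b) a b) (z : S) :
    0 ≤ nu p z :=
  div_nonneg (le_of_lt (sigmaW_all_pos (q := fun _ => p) (ε := 0) hp0 hirr z))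
    (le_of_lt (Zpos hp0 hirr))

lemma nu_sum_one [Nonempty S] (hp0 : ∀ a b, 0 ≤ p a b)
    (hirr : ∀ a b, Relation.ReflTransGen (fun a b => 0 < p a b) a b) :
    ∑ z, nu p z = 1 := by
  simp only [nu]
  rw [← Finset.sum_div]
  exact div_self (ne_of_gt (Zpos hp0 hirr))

lemma nu_stationary [Nonempty S] (hp0 : ∀ a b, 0 ≤ p a b)
    (hrow : ∀ a, ∑ b, p a b = 1)
    (hirr : ∀ a b, Relation.ReflTransGen (fun a b => 0 < p a b) a b) (y : S) :
    ∑ z, nu p z * p z y = nu p y := by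
  have h1 : ∑ z, nu p z * p z y
      = (∑ z, sigmaW p z * p z y) / ∑ z, sigmaW p z := by
    rw [Finset.sum_div]
    exact Finset.sum_congr rfl fun z _ => by simp only [nu]; ring
  rw [h1, sigma_stationary p hrow y, nu]

end Aux

theorem stable_iff_beta_max
    {S : Type*} [Fintype S] [DecidableEq S]
    (I : Set ℝ) (hI : I ⊆ Set.Ioi (0 : ℝ))
    (h0 : ClusterPt (0 : ℝ) (Filter.principal I))
    (p : ℝ → S → S → ℝ)
    (hp : ∀ ε ∈ I, ∀ x y : S, 0 ≤ p ε x y)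
    (hrow : ∀ ε ∈ I, ∀ x : S, ∑ y, p ε x y = 1)
    (hirr : ∀ ε ∈ I, ∀ x y : S,
      Relation.ReflTransGen (fun a b => 0 < p ε a b) x y)
    (hpos : ∀ x y : S, x ≠ y →
      (∀ ε ∈ I, p ε x y = 0) ∨ (∀ ε ∈ I, 0 < p ε x y))
    (htotal : ∀ L L' : List (S × S),
      (∀ e ∈ L, e.1 ≠ e.2) → (∀ e ∈ L', e.1 ≠ e.2) →
      Prec I (fun ε => (L.map (fun e => p ε e.1 e.2)).prod)
             (fun ε => (L'.map (fun e => p ε e.1 e.2)).prod) ∨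
      Prec I (fun ε => (L'.map (fun e => p ε e.1 e.2)).prod)
             (fun ε => (L.map (fun e => p ε e.1 e.2)).prod))
    (x : S) :
    StochasticallyStable I p x ↔ ∀ y : S, Prec I (beta p y) (beta p x) := by
  classical
  have hSne : Nonempty S := ⟨x⟩
  have hNeBot : (nhdsWithin (0:ℝ) I).NeBot := h0
  set N : ℝ := (Fintype.card (S → S) : ℝ) with hN
  have hNpos : 0 < N := by
    rw [hN]
    exact_mod_cast Fintype.card_pos
  constructor
  · rintro ⟨μ, hμ, hlim⟩
    intro y
    set L := Filter.liminf (fun ε => μ ε x) (nhdsWithin 0 I) with hL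
    have hc : 0 < L / 2 := by linarith
    have hbdd : Filter.IsBoundedUnder (· ≥ ·) (nhdsWithin (0:ℝ) I)
        (fun ε => μ ε x) := by
      refine ⟨0, Filter.eventually_map.mpr ?_⟩
      filter_upwards [self_mem_nhdsWithin] with ε hε
      exact (hμ ε hε).1 x
    have hev : ∀ᶠ ε in nhdsWithin (0:ℝ) I, L / 2 < μ ε x :=
      Filter.eventually_lt_of_lt_liminf (by linarith) hbdd
    have hev2 : ∀ᶠ ε in nhdsWithin (0:ℝ) I, ε ∈ I ∧ L / 2 < μ ε x := by
      filter_upwards [self_mem_nhdsWithin, hev] with ε h1 h2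
      exact ⟨h1, h2⟩
    obtain ⟨δ, hδ, hball⟩ :=
      Metric.mem_nhdsWithin_iff.mp (Filter.eventually_iff.mp hev2)
    refine ⟨N / (L/2), by positivity, δ, hδ, ?_⟩
    intro ε' hε' hlt
    have hmem : ε' ∈ Metric.ball (0:ℝ) δ ∩ I := by
      refine ⟨?_, hε'⟩
      rw [Metric.mem_ball, Real.dist_eq, sub_zero, abs_of_pos (hI hε')]
      exact hlt
    have h2 : L / 2 < μ ε' x := (hball hmem).2
    have hq0 : ∀ a b, 0 ≤ p ε' a b := hp ε' hε'
    have hqirr : ∀ a b, Relation.ReflTransGen (fun a b => 0 < p ε' a b) a b :=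
      hirr ε' hε'
    obtain ⟨hμ0, hμ1, hμs⟩ := hμ ε' hε'
    have hμν : μ ε' = nu (p ε') :=
      stationary_unique hq0 hqirr hμ0 hμ1 hμs (nu_nonneg hq0 hqirr)
        (nu_sum_one hq0 hqirr) (nu_stationary hq0 (hrow ε' hε') hqirr)
    have hZ : 0 < ∑ z, sigmaW (p ε') z := Zpos hq0 hqirr
    have h3 : L/2 < sigmaW (p ε') x / ∑ z, sigmaW (p ε') z := by
      rw [hμν] at h2
      exact h2
    have h4 : (L/2) * (∑ z, sigmaW (p ε') z) < sigmaW (p ε') x :=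
      (lt_div_iff₀ hZ).mp h3
    have h5 : beta p y ε' ≤ ∑ z, sigmaW (p ε') z := by
      refine le_trans (beta_le_sigmaW hq0 y) ?_
      exact Finset.single_le_sum
        (fun z _ => le_of_lt (sigmaW_all_pos (q := p) hq0 hqirr z))
        (Finset.mem_univ y)
    have h6 : sigmaW (p ε') x ≤ N * beta p x ε' := sigmaW_le_beta hq0 x
    rw [div_mul_eq_mul_div, le_div_iff₀ hc]
    have h7 := mul_le_mul_of_nonneg_left h5 hc.le
    linarith
  · intro H
    choose b hb e he hP using H
    refine ⟨fun ε => nu (p ε), fun ε hε => ?_, ?_⟩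
    · have hq0 := hp ε hε
      have hqirr := hirr ε hε
      exact ⟨nu_nonneg hq0 hqirr, nu_sum_one hq0 hqirr,
        nu_stationary hq0 (hrow ε hε) hqirr⟩
    · set B := ∑ y, b y with hB
      have hBpos : 0 < B := Finset.sum_pos (fun y _ => hb y) Finset.univ_nonempty
      have hcpos : 0 < 1 / (N * B) := by positivity
      have hevI : ∀ᶠ ε in nhdsWithin (0:ℝ) I, ε ∈ I := self_mem_nhdsWithin
      have hevy : ∀ᶠ ε in nhdsWithin (0:ℝ) I, ∀ y, ε < e y := by
        rw [Filter.eventually_all]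
        intro y
        exact nhdsWithin_le_nhds (Iio_mem_nhds (he y))
      have hbound : ∀ᶠ ε in nhdsWithin (0:ℝ) I, 1/(N*B) ≤ nu (p ε) x := by
        filter_upwards [hevI, hevy] with ε hε hred
        have hq0 := hp ε hε
        have hqirr := hirr ε hε
        have hβx : 0 < beta p x ε := beta_all_pos hqirr x
        have hZ : 0 < ∑ z, sigmaW (p ε) z := Zpos hq0 hqirr
        have hZle : ∑ z, sigmaW (p ε) z ≤ N * B * beta p x ε := by
          calc ∑ z, sigmaW (p ε) z ≤ ∑ z, N * (b z * beta p x ε) := by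
                refine Finset.sum_le_sum fun z _ => ?_
                refine le_trans (sigmaW_le_beta hq0 z) ?_
                exact mul_le_mul_of_nonneg_left (hP z ε hε (hred z)) hNpos.le
            _ = N * B * beta p x ε := by
                rw [← Finset.mul_sum, ← Finset.sum_mul, ← mul_assoc]
        have hβσ : beta p x ε ≤ sigmaW (p ε) x := beta_le_sigmaW hq0 x
        rw [nu, div_le_div_iff₀ (by positivity) hZ]
        have h8 := mul_le_mul_of_nonneg_left hβσ (mul_pos hNpos hBpos).le
        linarith
      refine lt_of_lt_of_le hcpos (Filter.le_liminf_of_le ?_ hbound)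
      have hub : ∀ᶠ ε in nhdsWithin (0:ℝ) I, nu (p ε) x ≤ 1 := by
        filter_upwards [hevI] with ε hε
        have hq0 := hp ε hε
        have hqirr := hirr ε hε
        have h9 := Finset.single_le_sum (f := fun z => nu (p ε) z)
          (fun z _ => nu_nonneg hq0 hqirr z) (Finset.mem_univ x)
        rw [nu_sum_one hq0 hqirr] at h9
        exact h9
      exact Filter.IsBoundedUnder.isCoboundedUnder_ge
        ⟨1, Filter.eventually_map.mpr hub⟩
end
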